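/- arXiv:1406.5345 — 12 statements merged into one kernel-verified Lean document; each statement's English description precedes it below -/
import Mathlib

section
/- For every positive integer n, the sum over k from 1 to n of binomial(2n, 2k-1) * (2^(2k) - 1)/k * B_{2k} equals 1, where B_{2k} denotes the (2k)-th Bernoulli number. -/
/-!
Since `(2n+1) C(2n, 2k-1) = 2k C(2n+1, 2k)`, the sum is `2/(2n+1)` times
`∑ C(2n+1, 2k) (4^k - 1) B_{2k}`. For odd `m > 1`, both `∑_j C(m,j) B_j = B_m` and
`∑_j C(m,j) 2^j B_j = 2^m B_m(1/2)` vanish, the latter by the reflection `B_m(1-x) = -B_m(x)`.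
Hence `∑_j C(m,j) (2^j - 1) B_j = 0`; of its odd terms only `j = 1` survives, contributing `-m/2`,
so the even terms sum to `m/2`.
-/

open Finset

namespace Polynomial

theorem bernoulli_eval_one_half_of_odd {n : ℕ} (hn : Odd n) : (bernoulli n).eval (1 / 2) = 0 := by
  have h := bernoulli_eval_one_sub n (1 / 2)
  rw [hn.neg_one_pow] at h
  norm_num at h
  linarith

theorem two_pow_mul_bernoulli_eval_one_half (n : ℕ) :
    2 ^ n * (bernoulli n).eval (1 / 2)
      = ∑ i ∈ range (n + 1), (n.choose i : ℚ) * 2 ^ i * _root_.bernoulli i := by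
  rw [bernoulli, eval_finsetSum, mul_sum]
  refine sum_congr rfl fun i hi => ?_
  have h2n : (2 : ℚ) ^ n = 2 ^ (n - i) * 2 ^ i := by
    rw [← pow_add, Nat.sub_add_cancel (mem_range_succ_iff.1 hi)]
  rw [eval_monomial, h2n, one_div, inv_pow]
  field_simp

end Polynomial

theorem sum_choose_mul_two_pow_sub_one_mul_bernoulli_of_odd {m : ℕ} (hm : Odd m) (hm1 : 1 < m) :
    ∑ i ∈ range (m + 1), (m.choose i : ℚ) * (2 ^ i - 1) * bernoulli i = 0 := by
  have hsum_two_pow : ∑ i ∈ range (m + 1), (m.choose i : ℚ) * 2 ^ i * bernoulli i = 0 := by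
    rw [← Polynomial.two_pow_mul_bernoulli_eval_one_half,
      Polynomial.bernoulli_eval_one_half_of_odd hm, mul_zero]
  have hsum : ∑ i ∈ range (m + 1), (m.choose i : ℚ) * bernoulli i = 0 := by
    rw [sum_range_succ, sum_bernoulli, if_neg hm1.ne', bernoulli_eq_zero_of_odd hm hm1, mul_zero,
      add_zero]
  simp only [mul_sub, sub_mul, mul_one, sum_sub_distrib, hsum_two_pow, hsum, sub_zero]

theorem sum_range_two_mul_add_two_eq_add_sum_even {M : Type*} [AddCommMonoid M] (f : ℕ → M)
    (hf : ∀ k, 1 ≤ k → f (2 * k + 1) = 0) (n : ℕ) :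
    ∑ j ∈ range (2 * n + 2), f j = f 0 + f 1 + ∑ k ∈ Icc 1 n, f (2 * k) := by
  induction n with
  | zero => simp [sum_range_succ]
  | succ n ih =>
    rw [show 2 * (n + 1) + 2 = 2 * n + 2 + 1 + 1 by ring, sum_range_succ, sum_range_succ, ih,
      show 2 * n + 2 + 1 = 2 * (n + 1) + 1 by ring, hf (n + 1) (by omega),
      sum_Icc_succ_top (by omega : 1 ≤ n + 1), add_zero, mul_add_one, add_assoc]

theorem sum_Icc_choose_mul_four_pow_sub_one_mul_bernoulli {n : ℕ} (hn : 0 < n) :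
    ∑ k ∈ Icc 1 n, ((2 * n + 1).choose (2 * k) : ℚ) * (2 ^ (2 * k) - 1) * bernoulli (2 * k)
      = (2 * n + 1) / 2 := by
  have h := sum_range_two_mul_add_two_eq_add_sum_even
    (fun i => ((2 * n + 1).choose i : ℚ) * (2 ^ i - 1) * bernoulli i)
    (fun k hk => by simp [bernoulli_eq_zero_of_odd (odd_two_mul_add_one k) (by omega)]) n
  rw [sum_choose_mul_two_pow_sub_one_mul_bernoulli_of_odd (odd_two_mul_add_one n) (by omega)] at h
  simp only [Nat.choose_one_right, bernoulli_one] at h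
  push_cast at h
  linear_combination -h

theorem cast_choose_sub_one_div {m j : ℕ} (hj : j ≠ 0) :
    (m.choose (j - 1) : ℚ) / j = (m + 1).choose j / (m + 1) := by
  obtain ⟨i, rfl⟩ := Nat.exists_eq_add_one_of_ne_zero hj
  have h : ((m + 1 : ℕ) : ℚ) * m.choose i = (m + 1).choose (i + 1) * (i + 1 : ℕ) := by
    exact_mod_cast Nat.add_one_mul_choose_eq m i
  push_cast at h ⊢
  field_simp
  linear_combination h

theorem sum_bernoulli_identity (n : ℕ) (hn : 0 < n) :
    ∑ k ∈ Finset.Icc 1 n,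
      (Nat.choose (2 * n) (2 * k - 1) : ℚ) * ((2 ^ (2 * k) - 1) / k) * bernoulli (2 * k) = 1 := by
  have hterm : ∀ k ∈ Icc 1 n,
      (Nat.choose (2 * n) (2 * k - 1) : ℚ) * ((2 ^ (2 * k) - 1) / k) * bernoulli (2 * k)
        = 2 / (2 * n + 1) *
          (((2 * n + 1).choose (2 * k) : ℚ) * (2 ^ (2 * k) - 1) * bernoulli (2 * k)) := by
    intro k hk
    have hk0 : (k : ℚ) ≠ 0 := Nat.cast_ne_zero.2 (by grind)
    have hchoose := cast_choose_sub_one_div (m := 2 * n) (j := 2 * k) (by grind)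
    push_cast at hchoose
    field_simp at hchoose ⊢
    linear_combination (2 ^ (2 * k) - 1) * bernoulli (2 * k) * hchoose
  rw [sum_congr rfl hterm, ← mul_sum, sum_Icc_choose_mul_four_pow_sub_one_mul_bernoulli hn]
  field_simp
end

section
/- For every positive integer n, the sum over k from 2 to n-1 of binomial(2n, 2k-1) * (2^(2(n-k+1)) - 1) * (2^(2(k-1)) - 1) / (n-k+1) * B_{2(n-k+1)} equals (2^(2(n-1)) - 1) * (2 - n), where B_m denotes the m-th Bernoulli number. -/
/-!
Substituting `j = n + 1 - k` (and using `C(2n, m) = C(2n, 2n - m)`) turns the summand into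
`C(2n, 2j-1) (4^j - 1)(4^(n-j) - 1) B_{2j} / j`. Completing the range to `1 ≤ j ≤ n` adds the
terms `j = 1`, equal to `n (4^(n-1) - 1)`, and `j = n`, which vanishes. Since
`(2n+1) C(2n, 2j-1) = 2j C(2n+1, 2j)`, the completed sum is `2/(2n+1)` times
`∑ C(2n+1, 2j) B_{2j} (4^n + 1 - 4^j - 4^n 4^(-j))`, a combination of even parts of
`∑ C(N, k) B_k q^k = q^N B_N(1/q)` with `N = 2n+1` at `q = 1, 2, 1/2`. For odd `N > 1` the odd
part is the single term `-N q / 2`, and `B_N(1) = B_N(1/2) = 0`, `B_N(2) = N`.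
-/

open Finset

theorem Finset.sum_range_two_mul {M : Type*} [AddCommMonoid M] (f : ℕ → M) (m : ℕ) :
    ∑ k ∈ range (2 * m), f k = ∑ j ∈ range m, (f (2 * j) + f (2 * j + 1)) := by
  induction m with
  | zero => simp
  | succ m ih => rw [Nat.mul_succ, sum_range_succ, sum_range_succ, sum_range_succ, ih, add_assoc]

namespace Polynomial

theorem bernoulli_eval_one_of_odd {N : ℕ} (hN : Odd N) (h1 : 1 < N) :
    (bernoulli N).eval 1 = 0 := by
  rw [bernoulli_eval_one, bernoulli'_eq_zero_of_odd hN h1]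

theorem bernoulli_eval_two_of_odd {N : ℕ} (hN : Odd N) (h1 : 1 < N) :
    (bernoulli N).eval 2 = N := by
  simpa [bernoulli_eval_one_of_odd hN h1, one_add_one_eq_two] using bernoulli_eval_one_add N 1

theorem bernoulli_eval_half_of_odd {N : ℕ} (hN : Odd N) : (bernoulli N).eval 2⁻¹ = 0 := by
  have h := bernoulli_eval_one_sub N 2⁻¹
  rw [hN.neg_one_pow, show (1 : ℚ) - 2⁻¹ = 2⁻¹ by norm_num] at h
  linarith

theorem pow_mul_bernoulli_eval_inv (N : ℕ) {q : ℚ} (hq : q ≠ 0) :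
    q ^ N * (bernoulli N).eval q⁻¹ =
      ∑ k ∈ range (N + 1), (N.choose k : ℚ) * _root_.bernoulli k * q ^ k := by
  rw [bernoulli, eval_finsetSum, mul_sum]
  refine sum_congr rfl fun k hk ↦ ?_
  have hpow : q ^ N * q⁻¹ ^ (N - k) = q ^ k := by
    rw [← Nat.add_sub_of_le (Nat.lt_succ_iff.mp (mem_range.mp hk)), pow_add,
      Nat.add_sub_cancel_left, mul_assoc, ← mul_pow, mul_inv_cancel₀ hq, one_pow, mul_one]
  rw [eval_monomial, ← hpow]
  ring

end Polynomial

theorem sum_range_choose_mul_bernoulli_two_mul_mul_pow (n : ℕ) {q : ℚ} (hq : q ≠ 0) :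
    ∑ j ∈ range (n + 1), ((2 * n + 1).choose (2 * j) : ℚ) * bernoulli (2 * j) * q ^ (2 * j) =
      q ^ (2 * n + 1) * (Polynomial.bernoulli (2 * n + 1)).eval q⁻¹ + (2 * n + 1) * q / 2 := by
  have hodd : ∑ j ∈ range (n + 1),
      ((2 * n + 1).choose (2 * j + 1) : ℚ) * bernoulli (2 * j + 1) * q ^ (2 * j + 1) =
        -((2 * n + 1) * q / 2) := by
    rw [sum_eq_single_of_mem 0 (by simp) fun j _ hj ↦ by
      rw [bernoulli_eq_zero_of_odd (odd_two_mul_add_one j) (by omega), mul_zero, zero_mul]]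
    simp only [mul_zero, zero_add, Nat.choose_one_right, bernoulli_one, pow_one]
    push_cast
    ring
  rw [Polynomial.pow_mul_bernoulli_eval_inv _ hq, show 2 * n + 1 + 1 = 2 * (n + 1) by ring,
    sum_range_two_mul, sum_add_distrib, hodd, neg_add_cancel_right]

theorem sum_range_choose_mul_bernoulli_mul_four_pow_sub_one (n : ℕ) (hn : n ≠ 0) :
    ∑ j ∈ range (n + 1), ((2 * n + 1).choose (2 * j) : ℚ) * bernoulli (2 * j) *
      ((2 ^ (2 * j) - 1) * (2 ^ (2 * (n - j)) - 1)) = (2 * n + 1) * (2 ^ (2 * (n - 1)) - 1) := by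
  set E : ℚ → ℚ := fun q ↦
    ∑ j ∈ range (n + 1), ((2 * n + 1).choose (2 * j) : ℚ) * bernoulli (2 * j) * q ^ (2 * j)
  have hodd : Odd (2 * n + 1) := odd_two_mul_add_one n
  have hlt : 1 < 2 * n + 1 := by omega
  have hweight : ∀ j ≤ n, ((2 : ℚ) ^ (2 * j) - 1) * (2 ^ (2 * (n - j)) - 1) =
      (2 ^ (2 * n) + 1) * 1 ^ (2 * j) - 2 ^ (2 * j) - 2 ^ (2 * n) * 2⁻¹ ^ (2 * j) := by
    intro j hj
    rw [inv_pow, one_pow, ← Nat.add_sub_of_le hj, Nat.add_sub_cancel_left, mul_add, pow_add]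
    field_simp
    ring
  calc _ = (2 ^ (2 * n) + 1) * E 1 - E 2 - 2 ^ (2 * n) * E 2⁻¹ := by
        simp only [E, mul_sum, ← sum_sub_distrib]
        refine sum_congr rfl fun j hj ↦ ?_
        rw [hweight j (Nat.lt_succ_iff.mp (mem_range.mp hj))]
        ring
    _ = (2 * n + 1) * (2 ^ (2 * (n - 1)) - 1) := by
        simp only [E, sum_range_choose_mul_bernoulli_two_mul_mul_pow n (q := 1) one_ne_zero,
          sum_range_choose_mul_bernoulli_two_mul_mul_pow n (q := 2) two_ne_zero,
          sum_range_choose_mul_bernoulli_two_mul_mul_pow n (q := 2⁻¹) (by norm_num), inv_inv,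
          inv_one, Polynomial.bernoulli_eval_one_of_odd hodd hlt,
          Polynomial.bernoulli_eval_two_of_odd hodd hlt,
          Polynomial.bernoulli_eval_half_of_odd hodd]
        obtain ⟨m, rfl⟩ := Nat.exists_eq_add_one_of_ne_zero hn
        rw [inv_pow, Nat.add_sub_cancel]
        field_simp
        push_cast
        ring

theorem sum_Icc_choose_mul_four_pow_sub_one_div_mul_bernoulli (n : ℕ) (hn : n ≠ 0) :
    ∑ j ∈ Icc 1 n, ((2 * n).choose (2 * j - 1) : ℚ) *
      ((2 ^ (2 * j) - 1) * (2 ^ (2 * (n - j)) - 1) / j) * bernoulli (2 * j) =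
        2 * (2 ^ (2 * (n - 1)) - 1) := by
  refine mul_left_cancel₀ (by positivity : (2 * n + 1 : ℚ) ≠ 0) ?_
  calc _ = ∑ j ∈ Icc 1 n, 2 * (((2 * n + 1).choose (2 * j) : ℚ) * bernoulli (2 * j) *
        ((2 ^ (2 * j) - 1) * (2 ^ (2 * (n - j)) - 1))) := by
        rw [mul_sum]
        refine sum_congr rfl fun j hj ↦ ?_
        obtain ⟨i, rfl⟩ := Nat.exists_eq_add_one_of_ne_zero (by grind : j ≠ 0)
        have hchoose : ((2 * n + 1) * (2 * n).choose (2 * i + 1) : ℚ) =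
            (2 * n + 1).choose (2 * i + 2) * (2 * i + 2) := by
          exact_mod_cast Nat.add_one_mul_choose_eq (2 * n) (2 * i + 1)
        rw [show 2 * (i + 1) - 1 = 2 * i + 1 by omega, show 2 * (i + 1) = 2 * i + 2 by ring]
        push_cast
        field_simp
        linear_combination bernoulli (2 * i + 2) * (2 ^ (2 * i + 2) - 1) *
          (2 ^ (2 * (n - (i + 1))) - 1) * hchoose
    _ = 2 * ∑ j ∈ range (n + 1), ((2 * n + 1).choose (2 * j) : ℚ) * bernoulli (2 * j) *
        ((2 ^ (2 * j) - 1) * (2 ^ (2 * (n - j)) - 1)) := by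
        rw [← Ico_add_one_right_eq_Icc, ← mul_sum, range_eq_Ico,
          sum_eq_sum_Ico_succ_bot n.succ_pos]
        simp
    _ = _ := by
        rw [sum_range_choose_mul_bernoulli_mul_four_pow_sub_one n hn]
        ring

theorem bernoulli_sum_identity_general (n : ℕ) :
    ∑ k ∈ Finset.Icc 2 (n - 1),
      (Nat.choose (2 * n) (2 * k - 1) : ℚ) *
        ((2 ^ (2 * (n - k + 1)) - 1) * (2 ^ (2 * (k - 1)) - 1) / (n - k + 1 : ℕ)) *
          bernoulli (2 * (n - k + 1)) = (2 ^ (2 * (n - 1)) - 1) * (2 - (n : ℚ)) := by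
  rcases lt_or_ge n 2 with hn | hn
  · interval_cases n <;> simp
  set g : ℕ → ℚ := fun j ↦ ((2 * n).choose (2 * j - 1) : ℚ) *
    ((2 ^ (2 * j) - 1) * (2 ^ (2 * (n - j)) - 1) / j) * bernoulli (2 * j) with hg
  have hsplit : ∑ j ∈ Icc 1 n, g j = g 1 + ∑ j ∈ Ico 2 n, g j + g n := by
    rw [← Ico_add_one_right_eq_Icc, sum_Ico_succ_top (by omega), sum_eq_sum_Ico_succ_bot hn]
  have hg1 : g 1 = n * (2 ^ (2 * (n - 1)) - 1) := by
    norm_num [hg, bernoulli_two]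
    ring
  have hgn : g n = 0 := by simp [hg]
  calc _ = ∑ j ∈ Ico 2 n, g j := by
        refine sum_nbij' (fun k ↦ n + 1 - k) (fun j ↦ n + 1 - j) ?_ ?_ ?_ ?_ fun k hk ↦ ?_
        any_goals intro k hk; simp only [mem_Icc, mem_Ico] at hk ⊢; omega
        rw [mem_Icc] at hk
        rw [← Nat.choose_symm (by omega : 2 * k - 1 ≤ 2 * n),
          show n - k + 1 = n + 1 - k by omega,
          show 2 * n - (2 * k - 1) = 2 * (n + 1 - k) - 1 by omega]
        simp only [hg, show n - (n + 1 - k) = k - 1 by omega]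
    _ = _ := by
        linear_combination
          sum_Icc_choose_mul_four_pow_sub_one_div_mul_bernoulli n (by omega) - hsplit - hg1 - hgn

theorem bernoulli_sum_identity (n : ℕ) (hn : 0 < n) :
    ∑ k ∈ Finset.Icc 2 (n - 1),
      (Nat.choose (2 * n) (2 * k - 1) : ℚ) *
        ((2 ^ (2 * (n - k + 1)) - 1) * (2 ^ (2 * (k - 1)) - 1) / (n - k + 1 : ℕ)) *
          bernoulli (2 * (n - k + 1)) = (2 ^ (2 * (n - 1)) - 1) * (2 - (n : ℚ)) :=
  bernoulli_sum_identity_general n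
end

section
/- For every positive integer n, the sum over k from 0 to n of binomial(2n+1, 2k) * (2^(2k-1) - 1) * B_{2k} equals 0, where B_{2k} denotes the (2k)-th Bernoulli number. -/
/-!
Put `m = 2n + 1`. The odd-index terms of the full sum over `j ≤ m` vanish (`B_j = 0` for odd
`j > 1`, and the factor `2 ^ (j - 1) - 1` kills `j = 1`), so the sum equals
`½ ∑ C(m,j) 2^j B_j - ∑ C(m,j) B_j = ½ · 2^m B_m(½) - B_m(1)`. Both vanish for odd `m > 1`:
`B_m(½) = 0` by the symmetry `B_m(1 - x) = (-1)^m B_m(x)`, and `B_m(1) = B'_m = 0`.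
-/

open Finset

namespace Polynomial

theorem bernoulli_eval_eq_sum (m : ℕ) (x : ℚ) :
    (bernoulli m).eval x = ∑ i ∈ range (m + 1), _root_.bernoulli i * m.choose i * x ^ (m - i) := by
  simp [bernoulli, eval_finsetSum]

theorem bernoulli_eval_half_of_odd_s5 {m : ℕ} (hm : Odd m) : (bernoulli m).eval (1 / 2) = 0 := by
  have h := bernoulli_eval_one_sub m (1 / 2)
  rw [hm.neg_one_pow] at h
  norm_num at h ⊢
  linarith

end Polynomial

theorem sum_choose_mul_two_pow_mul_bernoulli_of_odd {m : ℕ} (hm : Odd m) :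
    ∑ j ∈ range (m + 1), (m.choose j : ℚ) * 2 ^ j * bernoulli j = 0 := by
  calc ∑ j ∈ range (m + 1), (m.choose j : ℚ) * 2 ^ j * bernoulli j
      = 2 ^ m * (Polynomial.bernoulli m).eval (1 / 2) := by
        rw [Polynomial.bernoulli_eval_eq_sum, mul_sum]
        refine sum_congr rfl fun j hj => ?_
        rw [← pow_sub_mul_pow 2 (mem_range_succ_iff.mp hj), one_div, inv_pow]
        field_simp
    _ = 0 := by rw [Polynomial.bernoulli_eval_half_of_odd_s5 hm, mul_zero]

theorem sum_choose_mul_bernoulli_of_odd {m : ℕ} (hm : Odd m) (h1 : 1 < m) :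
    ∑ j ∈ range (m + 1), (m.choose j : ℚ) * bernoulli j = 0 := by
  rw [sum_range_succ, sum_bernoulli, if_neg h1.ne', bernoulli_eq_zero_of_odd hm h1, mul_zero,
    add_zero]

theorem Finset.sum_range_two_mul_of_odd_eq_zero {M : Type*} [AddCommMonoid M] (f : ℕ → M)
    (hf : ∀ k, f (2 * k + 1) = 0) (N : ℕ) :
    ∑ j ∈ range (2 * N), f j = ∑ k ∈ range N, f (2 * k) := by
  induction N with
  | zero => simp
  | succ N ih => rw [mul_add, mul_one, sum_range_succ, sum_range_succ, hf, add_zero,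
      sum_range_succ, ih]

theorem sum_choose_bernoulli_eq_zero (n : ℕ) (hn : 0 < n) :
    ∑ k ∈ Finset.range (n + 1),
      (Nat.choose (2 * n + 1) (2 * k) : ℚ) * ((2 : ℚ) ^ (2 * (k : ℤ) - 1) - 1) *
        bernoulli (2 * k) = 0 := by
  set m := 2 * n + 1
  have hm : Odd m := odd_two_mul_add_one n
  let f : ℕ → ℚ := fun j => (m.choose j : ℚ) * ((2 : ℚ) ^ ((j : ℤ) - 1) - 1) * bernoulli j
  have hf_odd : ∀ k, f (2 * k + 1) = 0 := by
    rintro (_ | k)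
    · simp [f]
    · simp [f, bernoulli_eq_zero_of_odd (odd_two_mul_add_one (k + 1)) (by omega)]
  have hf_eq : ∀ j, f j = (1 / 2) * ((m.choose j : ℚ) * 2 ^ j * bernoulli j)
      - (m.choose j : ℚ) * bernoulli j := fun j => by
    simp only [f, zpow_sub₀ (two_ne_zero (α := ℚ)), zpow_natCast, zpow_one]
    ring
  calc _ = ∑ k ∈ range (n + 1), f (2 * k) := by simp [f]
    _ = ∑ j ∈ range (m + 1), f j := by
        rw [← sum_range_two_mul_of_odd_eq_zero f hf_odd]; rfl
    _ = 1 / 2 * ∑ j ∈ range (m + 1), (m.choose j : ℚ) * 2 ^ j * bernoulli j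
        - ∑ j ∈ range (m + 1), (m.choose j : ℚ) * bernoulli j := by
        simp only [hf_eq, sum_sub_distrib, mul_sum]
    _ = 0 := by
        rw [sum_choose_mul_two_pow_mul_bernoulli_of_odd hm,
          sum_choose_mul_bernoulli_of_odd hm (by omega)]
        ring
end

section
/- For every positive integer n, 2 * (2^(2n) - 1) * B_{2n} is an integer, where B_{2n} denotes the (2n)-th Bernoulli number (a rational number). -/
/-!
By von Staudt–Clausen, `B_{2n} + ∑ 1/p` is an integer, the sum running over the primes `p` with
`(p - 1) ∣ 2n`. For each such `p`, Fermat's little theorem gives `p ∣ a (a^{2n} - 1)` for every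
integer `a`, so multiplying by `a (a^{2n} - 1)` clears all the denominators `p`.
-/

open Finset

theorem Int.prime_dvd_mul_pow_sub_one {p : ℕ} (hp : p.Prime) (a : ℤ) {k : ℕ} (hk : p - 1 ∣ k) :
    (p : ℤ) ∣ a * (a ^ k - 1) := by
  have : Fact p.Prime := ⟨hp⟩
  rw [← ZMod.intCast_zmod_eq_zero_iff_dvd]
  push_cast
  obtain ⟨m, rfl⟩ := hk
  by_cases ha : (a : ZMod p) = 0
  · rw [ha, zero_mul]
  · rw [pow_mul, ZMod.pow_card_sub_one_eq_one ha, one_pow, sub_self, mul_zero]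

theorem intCast_mul_one_div_mem_bot_of_dvd {m : ℤ} {p : ℕ} (h : (p : ℤ) ∣ m) :
    (m : ℚ) * (1 / p) ∈ (⊥ : Subring ℚ) := by
  obtain ⟨c, rfl⟩ := h
  rcases eq_or_ne p 0 with rfl | hp
  · simp
  · refine Subring.mem_bot.2 ⟨c, ?_⟩
    push_cast
    field_simp

theorem mul_pow_sub_one_mul_bernoulli_mem_bot (a : ℤ) (n : ℕ) :
    (a : ℚ) * (a ^ (2 * n) - 1) * bernoulli (2 * n) ∈ (⊥ : Subring ℚ) := by
  set S := (range (2 * n + 2)).filter fun p ↦ p.Prime ∧ p - 1 ∣ 2 * n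
  set c : ℤ := a * (a ^ (2 * n) - 1)
  obtain ⟨z, hz⟩ := Bernoulli.vonStaudt_clausen n
  have hsplit : (a : ℚ) * (a ^ (2 * n) - 1) * bernoulli (2 * n) =
      c * z - ∑ p ∈ S, (c : ℚ) * (1 / p) := by
    rw [hz, ← mul_sum]
    push_cast [c]
    ring
  rw [hsplit]
  refine sub_mem (mul_mem (Subring.mem_bot.2 ⟨c, rfl⟩) (Subring.mem_bot.2 ⟨z, rfl⟩))
    (sum_mem fun p hp ↦ ?_)
  obtain ⟨-, hp, hdvd⟩ := mem_filter.1 hp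
  exact intCast_mul_one_div_mem_bot_of_dvd (Int.prime_dvd_mul_pow_sub_one hp a hdvd)

theorem two_mul_two_pow_sub_one_mul_bernoulli_isInt_general (n : ℕ) :
    ∃ m : ℤ, 2 * ((2 : ℚ) ^ (2 * n) - 1) * bernoulli (2 * n) = (m : ℚ) := by
  obtain ⟨m, hm⟩ := Subring.mem_bot.1 (mul_pow_sub_one_mul_bernoulli_mem_bot 2 n)
  exact ⟨m, by exact_mod_cast hm.symm⟩

theorem two_mul_two_pow_sub_one_mul_bernoulli_isInt (n : ℕ) (hn : 0 < n) :
    ∃ m : ℤ, 2 * ((2 : ℚ) ^ (2 * n) - 1) * bernoulli (2 * n) = (m : ℚ) :=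
  two_mul_two_pow_sub_one_mul_bernoulli_isInt_general n
end

section
/- For every positive integer n, 2 * (2^(2n) - 1) * (2n-1)! * zeta(2n) / pi^(2n) is an integer, where zeta denotes the Riemann zeta function. -/
/-!
The series `tanh X = (exp (2X) - 1) / (exp (2X) + 1)` satisfies the Riccati equation
`tanh' = 1 - tanh ^ 2`. Reading this coefficientwise, the binomial convolution shows by strong
induction that every `m! * coeff m tanh` is an integer. Comparing `X * tanh` with the Bernoulli
generating function `X / (exp X - 1)` rescaled by `2` and `4` identifies
`(2n-1)! * coeff (2n-1) tanh` with `2^(2n) (2^(2n) - 1) B_(2n) / (2n)`, and Euler's formula for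
`ζ(2n)` turns the quantity in question into `(-1)^(n+1)` times this integer.
-/

open Nat Finset PowerSeries

namespace PowerSeries

section CommRing

variable {A : Type*} [CommRing A]

theorem factorial_mul_coeff_mul (f g : A⟦X⟧) (m : ℕ) :
    (m ! : A) * coeff m (f * g) = ∑ p ∈ antidiagonal m,
      (m.choose p.1 : A) * ((p.1 ! * coeff p.1 f) * (p.2 ! * coeff p.2 g)) := by
  rw [coeff_mul, Finset.mul_sum]
  refine Finset.sum_congr rfl fun p hp => ?_
  obtain rfl := mem_antidiagonal.1 hp
  rw [Nat.choose_symm_add, ← add_choose_mul_factorial_mul_factorial]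
  push_cast
  ring

theorem factorial_succ_mul_coeff_succ (f : A⟦X⟧) (m : ℕ) :
    ((m + 1)! : A) * coeff (m + 1) f = m ! * coeff m (d⁄dX A f) := by
  rw [coeff_derivative, factorial_succ]
  push_cast
  ring

theorem factorial_mul_coeff_mem_of_derivative_eq_one_sub_sq (S : Subring A) {f : A⟦X⟧}
    (hf : d⁄dX A f = 1 - f ^ 2) (h0 : constantCoeff f ∈ S) (m : ℕ) :
    (m ! : A) * coeff m f ∈ S := by
  induction m using Nat.strong_induction_on with
  | _ m ih =>
  cases m with
  | zero => simpa using h0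
  | succ m =>
    rw [factorial_succ_mul_coeff_succ, hf, map_sub, mul_sub, sq, factorial_mul_coeff_mul]
    refine sub_mem (mul_mem (natCast_mem S _) ?_) (sum_mem fun p hp => ?_)
    · rw [coeff_one]
      split_ifs
      exacts [one_mem S, zero_mem S]
    · rw [HasAntidiagonal.mem_antidiagonal] at hp
      exact mul_mem (natCast_mem S _) (mul_mem (ih _ (by omega)) (ih _ (by omega)))

theorem derivative_exp_sq [Algebra ℚ A] : d⁄dX A (exp A ^ 2) = 2 * exp A ^ 2 := by
  rw [Derivation.leibniz_pow, derivative_exp]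
  simp only [nsmul_eq_mul, smul_eq_mul]
  ring

theorem rescale_bernoulliPowerSeries_mul_exp_pow_sub_one [Algebra ℚ A] (k : ℕ) :
    rescale (k : A) (bernoulliPowerSeries A) * (exp A ^ k - 1) = (k : A⟦X⟧) * X := by
  have h := congrArg (rescale (k : A)) (bernoulliPowerSeries_mul_exp_sub_one A)
  rwa [map_mul, map_sub, map_one, rescale_X, ← exp_pow_eq_rescale_exp, map_natCast] at h

end CommRing

noncomputable def tanh : ℚ⟦X⟧ := (exp ℚ ^ 2 - 1) * (exp ℚ ^ 2 + 1)⁻¹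

theorem constantCoeff_exp_sq_add_one : constantCoeff (exp ℚ ^ 2 + 1) = 2 := by
  rw [map_add, map_pow, constantCoeff_exp, map_one]
  norm_num

theorem exp_sq_add_one_ne_zero : exp ℚ ^ 2 + 1 ≠ 0 := fun h => by
  simpa [h] using constantCoeff_exp_sq_add_one

theorem exp_sq_add_one_mul_tanh : (exp ℚ ^ 2 + 1) * tanh = exp ℚ ^ 2 - 1 := by
  rw [tanh, mul_left_comm, PowerSeries.mul_inv_cancel _ (by simp [constantCoeff_exp_sq_add_one]),
    mul_one]

theorem constantCoeff_tanh : constantCoeff tanh = 0 := by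
  have h := congrArg constantCoeff exp_sq_add_one_mul_tanh
  rw [map_mul, constantCoeff_exp_sq_add_one, map_sub, map_pow, constantCoeff_exp, map_one] at h
  linarith

theorem derivative_tanh : d⁄dX ℚ tanh = 1 - tanh ^ 2 := by
  set E := exp ℚ ^ 2
  set T := tanh
  have hT : (E + 1) * T = E - 1 := exp_sq_add_one_mul_tanh
  have hdT : (E + 1) * d⁄dX ℚ T = 2 * E * (1 - T) := by
    have h := congrArg (d⁄dX ℚ) hT
    rw [Derivation.leibniz, map_sub, map_add, derivative_exp_sq, Derivation.map_one_eq_zero,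
      smul_eq_mul, smul_eq_mul] at h
    linear_combination h
  refine mul_left_cancel₀ exp_sq_add_one_ne_zero ?_
  linear_combination hdT - (1 - T) * hT

theorem X_mul_tanh :
    X * tanh = X + rescale 4 (bernoulliPowerSeries ℚ) - rescale 2 (bernoulliPowerSeries ℚ) := by
  have hB2 := rescale_bernoulliPowerSeries_mul_exp_pow_sub_one (A := ℚ) 2
  have hB4 := rescale_bernoulliPowerSeries_mul_exp_pow_sub_one (A := ℚ) 4
  push_cast at hB2 hB4
  have hne : exp ℚ ^ 4 - 1 ≠ 0 := by
    intro h
    have h1 := congrArg (coeff 1) h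
    rw [exp_pow_eq_rescale_exp, map_sub, coeff_rescale, coeff_exp, coeff_one] at h1
    norm_num at h1
  -- `exp (4X) - 1 = (exp (2X) - 1) (exp (2X) + 1)` clears both Bernoulli denominators
  refine mul_right_cancel₀ hne ?_
  linear_combination (X * (exp ℚ ^ 2 - 1)) * exp_sq_add_one_mul_tanh - hB4 +
    (exp ℚ ^ 2 + 1) * hB2

theorem factorial_mul_coeff_tanh {k : ℕ} (hk : k ≠ 0) :
    (k ! : ℚ) * coeff k tanh =
      2 ^ (k + 1) * (2 ^ (k + 1) - 1) * bernoulli (k + 1) / (k + 1) := by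
  have h := congrArg (coeff (k + 1)) X_mul_tanh
  rw [coeff_succ_X_mul, map_sub, map_add, coeff_X, if_neg (by omega), coeff_rescale,
    coeff_rescale, bernoulliPowerSeries, coeff_mk, Algebra.algebraMap_self, RingHom.id_apply,
    show (4 : ℚ) = 2 ^ 2 by norm_num, ← pow_mul] at h
  rw [h, factorial_succ]
  push_cast
  field_simp
  ring

end PowerSeries

theorem riemannZeta_two_mul_nat_eq_bernoulli_div {n : ℕ} (hn : n ≠ 0) :
    2 * ((2 : ℂ) ^ (2 * n) - 1) * (2 * n - 1)! * riemannZeta (2 * n) / (Real.pi : ℂ) ^ (2 * n) =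
      (-1) ^ (n + 1) * (2 ^ (2 * n) * (2 ^ (2 * n) - 1) * bernoulli (2 * n) / (2 * n)) := by
  have hfac : ((2 * n)! : ℂ) = 2 * n * (2 * n - 1)! := by
    rw [← Nat.mul_factorial_pred (by omega : 2 * n ≠ 0)]
    push_cast
    ring
  have hpow : (2 : ℂ) ^ (2 * n) = 2 * 2 ^ (2 * n - 1) := (mul_pow_sub_one (by omega) 2).symm
  have hfac' : ((2 * n - 1)! : ℂ) ≠ 0 := Nat.cast_ne_zero.mpr (Nat.factorial_ne_zero _)
  have hπ : (Real.pi : ℂ) ≠ 0 := Complex.ofReal_ne_zero.mpr Real.pi_ne_zero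
  rw [riemannZeta_two_mul_nat hn, hfac, hpow]
  field_simp

theorem zeta_even_int (n : ℕ) (hn : 0 < n) :
    ∃ m : ℤ, 2 * ((2 : ℂ) ^ (2 * n) - 1) * (Nat.factorial (2 * n - 1)) *
      riemannZeta (2 * n) / (Real.pi : ℂ) ^ (2 * n) = (m : ℂ) := by
  obtain ⟨m, hm⟩ := Subring.mem_bot.1 <|
    factorial_mul_coeff_mem_of_derivative_eq_one_sub_sq ⊥ derivative_tanh
      (constantCoeff_tanh ▸ zero_mem _) (2 * n - 1)
  rw [factorial_mul_coeff_tanh (by omega), ← Nat.cast_add_one,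
    Nat.sub_add_cancel (by omega)] at hm
  refine ⟨(-1) ^ (n + 1) * m, ?_⟩
  rw [riemannZeta_two_mul_nat_eq_bernoulli_div hn.ne', Int.cast_mul, ← Rat.cast_intCast m, hm]
  push_cast
  ring
end

section
/- Define polynomials p_n by p_0(x) = 1 and p_{n+1}(x) = x^2 * p_n''(x) + x*(1 - 2x) * p_n'(x) - x * p_n(x). Then for all n >= 0, p_{n+1}(x) = -x * sum over k from 0 to n of binomial(2n+1, 2k) * p_k(x). -/
/-!
With `F(x, t) = exp (x (1 - cosh t)) = ∑ pₙ(x) t²ⁿ / (2n)!`, the recurrence defining `pₙ` is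
`∂ₜ² F = (x² ∂ₓ² + x (1 - 2x) ∂ₓ - x) F`, and the theorem is the coefficient form of
`∂ₜ F = -x sinh t · F`. The induction only closes together with the coefficient form of
`∂ₓ F = (1 - cosh t) F`, namely `pₙ' = pₙ - ∑ₖ C(2n, 2k) pₖ`. Besides Pascal's rule (the Leibniz
rule in `t`), the only combinatorial input is `sinh t · (cosh t · F) = cosh t · (sinh t · F)`,
which on coefficients is the equality of the even and odd binomial sums of an odd row.
-/
open Polynomial

/-- The Sheffer-type polynomial sequence `p₀ = 1`,
`p_{n+1}(x) = x² pₙ″(x) + x(1 - 2x) pₙ′(x) - x pₙ(x)`. -/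
noncomputable def KLpoly : ℕ → Polynomial ℤ
  | 0 => 1
  | n + 1 =>
      X ^ 2 * derivative (derivative (KLpoly n)) +
        X * (1 - 2 * X) * derivative (KLpoly n) - X * KLpoly n

open Finset

section Convolution

variable {M : Type*} [AddCommMonoid M]

/- For `F = ∑ aₖ t²ᵏ / (2k)!`, `sinhConv a n` and `coshConv a n` are the coefficients of
`t²ⁿ⁺¹ / (2n+1)!` in `sinh t · F` and of `t²ⁿ / (2n)!` in `cosh t · F`; for an odd series
`G = ∑ aₖ t²ᵏ⁺¹ / (2k+1)!`, `coshConvOdd a n` is the coefficient of `t²ⁿ⁺¹ / (2n+1)!` in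
`cosh t · G`. -/

def sinhConv (a : ℕ → M) (n : ℕ) : M :=
  ∑ k ∈ range (n + 1), (2 * n + 1).choose (2 * k) • a k

def coshConv (a : ℕ → M) (n : ℕ) : M :=
  ∑ k ∈ range (n + 1), (2 * n).choose (2 * k) • a k

def coshConvOdd (a : ℕ → M) (n : ℕ) : M :=
  ∑ k ∈ range (n + 1), (2 * n + 1).choose (2 * k + 1) • a k

theorem map_sinhConv {N F : Type*} [AddCommMonoid N] [FunLike F M N] [AddMonoidHomClass F M N]
    (φ : F) (a : ℕ → M) (n : ℕ) : φ (sinhConv a n) = sinhConv (fun k ↦ φ (a k)) n := by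
  simp only [sinhConv, map_sum, map_nsmul]

theorem map_coshConvOdd {N F : Type*} [AddCommMonoid N] [FunLike F M N]
    [AddMonoidHomClass F M N] (φ : F) (a : ℕ → M) (n : ℕ) :
    φ (coshConvOdd a n) = coshConvOdd (fun k ↦ φ (a k)) n := by
  simp only [coshConvOdd, map_sum, map_nsmul]

theorem sinhConv_congr {a b : ℕ → M} {n : ℕ} (h : ∀ k ≤ n, a k = b k) :
    sinhConv a n = sinhConv b n :=
  sum_congr rfl fun k hk ↦ by rw [h k (Nat.lt_succ_iff.mp (mem_range.mp hk))]

theorem coshConvOdd_congr {a b : ℕ → M} {n : ℕ} (h : ∀ k ≤ n, a k = b k) :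
    coshConvOdd a n = coshConvOdd b n :=
  sum_congr rfl fun k hk ↦ by rw [h k (Nat.lt_succ_iff.mp (mem_range.mp hk))]

theorem sinhConv_sub {G : Type*} [AddCommGroup G] (a b : ℕ → G) (n : ℕ) :
    sinhConv (fun k ↦ a k - b k) n = sinhConv a n - sinhConv b n := by
  simp only [sinhConv, smul_sub, sum_sub_distrib]

theorem coshConv_succ (a : ℕ → M) (n : ℕ) :
    coshConv a (n + 1) = sinhConv a n + coshConvOdd (fun k ↦ a (k + 1)) n := by
  have hsinh : sinhConv a n = ∑ k ∈ range (n + 2), (2 * n + 1).choose (2 * k) • a k := by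
    rw [sum_range_succ, Nat.choose_eq_zero_of_lt (by omega), zero_smul, add_zero, sinhConv]
  have hpascal : ∀ k, (2 * (n + 1)).choose (2 * (k + 1))
      = (2 * n + 1).choose (2 * (k + 1)) + (2 * n + 1).choose (2 * k + 1) := fun k ↦ by
    rw [show 2 * (n + 1) = 2 * n + 1 + 1 by ring, show 2 * (k + 1) = 2 * k + 1 + 1 by ring,
      Nat.choose_succ_succ', add_comm]
  rw [hsinh, coshConv, coshConvOdd, sum_range_succ', sum_range_succ' _ (n + 1)]
  simp only [hpascal, add_smul, sum_add_distrib, mul_zero, Nat.choose_zero_right]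
  abel

theorem sinhConv_succ (a : ℕ → M) (n : ℕ) :
    sinhConv a (n + 1) = coshConv a (n + 1) + coshConvOdd (fun k ↦ a (k + 1)) n
      + sinhConv (fun k ↦ a (k + 1)) n := by
  have hpascal : ∀ k, (2 * (n + 1) + 1).choose (2 * (k + 1)) = (2 * (n + 1)).choose (2 * (k + 1))
      + (2 * n + 1).choose (2 * k + 1) + (2 * n + 1).choose (2 * k) := fun k ↦ by
    rw [show 2 * (k + 1) = 2 * k + 1 + 1 by ring, Nat.choose_succ_succ',
      show 2 * (n + 1) = 2 * n + 1 + 1 by ring, Nat.choose_succ_succ', Nat.choose_succ_succ']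
    ring
  rw [sinhConv, coshConv, coshConvOdd, sinhConv, sum_range_succ',
    sum_range_succ' _ (n + 1)]
  simp only [hpascal, add_smul, sum_add_distrib, mul_zero, Nat.choose_zero_right]
  abel

theorem sum_range_choose_even_eq_odd (m : ℕ) :
    ∑ i ∈ range (m + 1), (2 * m + 1).choose (2 * i)
      = ∑ i ∈ range (m + 1), (2 * m + 1).choose (2 * i + 1) := by
  rw [← sum_range_reflect]
  refine sum_congr rfl fun i hi ↦ ?_
  have hi : i ≤ m := Nat.lt_succ_iff.mp (mem_range.mp hi)
  rw [← Nat.choose_symm (by omega), show 2 * m + 1 - 2 * (m + 1 - 1 - i) = 2 * i + 1 by omega]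

theorem sum_Ico_choose_mul_choose_even_eq_odd {j n : ℕ} (h : j ≤ n) :
    ∑ k ∈ Ico j (n + 1), (2 * n + 1).choose (2 * k) * (2 * k).choose (2 * j)
      = ∑ k ∈ Ico j (n + 1), (2 * n + 1).choose (2 * k + 1) * (2 * k + 1).choose (2 * j) := by
  obtain ⟨m, rfl⟩ := Nat.exists_eq_add_of_le h
  simp only [sum_Ico_eq_sum_range, show j + m + 1 - j = m + 1 by omega]
  have heven : ∀ i, (2 * (j + m) + 1).choose (2 * (j + i)) * (2 * (j + i)).choose (2 * j)
      = (2 * (j + m) + 1).choose (2 * j) * (2 * m + 1).choose (2 * i) := fun i ↦ by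
    rw [Nat.choose_mul (by omega), show 2 * (j + m) + 1 - 2 * j = 2 * m + 1 by omega,
      show 2 * (j + i) - 2 * j = 2 * i by omega]
  have hodd : ∀ i, (2 * (j + m) + 1).choose (2 * (j + i) + 1) * (2 * (j + i) + 1).choose (2 * j)
      = (2 * (j + m) + 1).choose (2 * j) * (2 * m + 1).choose (2 * i + 1) := fun i ↦ by
    rw [Nat.choose_mul (by omega), show 2 * (j + m) + 1 - 2 * j = 2 * m + 1 by omega,
      show 2 * (j + i) + 1 - 2 * j = 2 * i + 1 by omega]
  simp only [heven, hodd, ← mul_sum, sum_range_choose_even_eq_odd]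

theorem sinhConv_coshConv (a : ℕ → M) (n : ℕ) :
    sinhConv (coshConv a) n = coshConvOdd (sinhConv a) n := by
  have hswap : ∀ c : ℕ → ℕ → ℕ, ∑ k ∈ range (n + 1), ∑ j ∈ range (k + 1), c k j • a j
      = ∑ j ∈ range (n + 1), (∑ k ∈ Ico j (n + 1), c k j) • a j := fun c ↦ by
    simp only [range_eq_Ico, sum_smul]
    exact (sum_Ico_Ico_comm 0 (n + 1) fun j k ↦ c k j • a j).symm
  simp only [sinhConv, coshConv, coshConvOdd, smul_sum, smul_smul, hswap]
  refine sum_congr rfl fun j hj ↦ ?_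
  rw [sum_Ico_choose_mul_choose_even_eq_odd (Nat.lt_succ_iff.mp (mem_range.mp hj))]

end Convolution

section Operator

variable {R : Type*} [CommRing R]

noncomputable def klOp : R[X] →ₗ[R] R[X] :=
  LinearMap.mulLeft R (X ^ 2) ∘ₗ derivative ∘ₗ derivative
    + LinearMap.mulLeft R (X * (1 - 2 * X)) ∘ₗ derivative - LinearMap.mulLeft R X

theorem klOp_apply (f : R[X]) :
    klOp f = X ^ 2 * derivative (derivative f) + X * (1 - 2 * X) * derivative f - X * f :=
  rfl

theorem klOp_X_mul (f : R[X]) :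
    klOp (X * f) = X * (klOp f + 2 * X * derivative f + (1 - 2 * X) * f) := by
  simp only [klOp_apply, derivative_mul, derivative_add, derivative_X, one_mul]
  ring

end Operator

theorem KLpoly_succ_eq_klOp (n : ℕ) : KLpoly (n + 1) = klOp (KLpoly n) :=
  rfl

theorem KLpoly_one : KLpoly 1 = -X * sinhConv KLpoly 0 := by
  simp [sinhConv, KLpoly]

theorem derivative_KLpoly_zero : derivative (KLpoly 0) = KLpoly 0 - coshConv KLpoly 0 := by
  simp [coshConv, KLpoly]

theorem derivative_KLpoly_succ_eq {n : ℕ}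
    (hA : ∀ k ≤ n, KLpoly (k + 1) = -X * sinhConv KLpoly k)
    (hB : ∀ k ≤ n, derivative (KLpoly k) = KLpoly k - coshConv KLpoly k) :
    derivative (KLpoly (n + 1)) = KLpoly (n + 1) - coshConv KLpoly (n + 1) := by
  have hS : derivative (sinhConv KLpoly n)
      = sinhConv KLpoly n - coshConvOdd (sinhConv KLpoly) n := by
    rw [map_sinhConv, sinhConv_congr hB, sinhConv_sub, sinhConv_coshConv]
  have hO : -X * coshConvOdd (sinhConv KLpoly) n = coshConvOdd (fun k ↦ KLpoly (k + 1)) n := by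
    rw [← LinearMap.mulLeft_apply (R := ℤ), map_coshConvOdd]
    exact coshConvOdd_congr fun k hk ↦ (hA k hk).symm
  rw [hA n le_rfl, coshConv_succ, ← hO, derivative_mul, hS]
  simp only [derivative_neg, derivative_X]
  ring

theorem KLpoly_add_two_eq {n : ℕ} (hA : KLpoly (n + 1) = -X * sinhConv KLpoly n)
    (hB : derivative (KLpoly (n + 1)) = KLpoly (n + 1) - coshConv KLpoly (n + 1)) :
    KLpoly (n + 2) = -X * sinhConv KLpoly (n + 1) := by
  have hL : klOp (sinhConv KLpoly n) = sinhConv (fun k ↦ KLpoly (k + 1)) n :=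
    map_sinhConv klOp KLpoly n
  have hS : X * derivative (sinhConv KLpoly n)
      = coshConv KLpoly (n + 1) + (X - 1) * sinhConv KLpoly n := by
    rw [hA, derivative_mul] at hB
    simp only [derivative_neg, derivative_X] at hB
    linear_combination -hB
  rw [KLpoly_succ_eq_klOp, hA, neg_mul, map_neg, klOp_X_mul, hL, sinhConv_succ]
  linear_combination -2 * X * hS - X * coshConv_succ KLpoly n

theorem KLpoly_succ_eq_and_derivative_eq : ∀ n : ℕ,
    KLpoly (n + 1) = -X * sinhConv KLpoly n ∧
      derivative (KLpoly n) = KLpoly n - coshConv KLpoly n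
  | 0 => ⟨KLpoly_one, derivative_KLpoly_zero⟩
  | m + 1 =>
    have ih (k : ℕ) (_ : k ≤ m) := KLpoly_succ_eq_and_derivative_eq k
    have hB := derivative_KLpoly_succ_eq (fun k hk ↦ (ih k hk).1) (fun k hk ↦ (ih k hk).2)
    ⟨KLpoly_add_two_eq (ih m le_rfl).1 hB, hB⟩

theorem KLpoly_succ_eq (n : ℕ) :
    KLpoly (n + 1) =
      -X * ∑ k ∈ Finset.range (n + 1), (Nat.choose (2 * n + 1) (2 * k) : ℤ) • KLpoly k := by
  rw [(KLpoly_succ_eq_and_derivative_eq n).1, sinhConv]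
  simp only [Nat.cast_smul_eq_nsmul]
end

section
/- Define polynomials p_n by p_0(x) = 1 and p_{n+1}(x) = x^2 * p_n''(x) + x*(1 - 2x) * p_n'(x) - x * p_n(x). Then for all n >= 1, p_n'(x) = - sum over k from 0 to n-1 of binomial(2n, 2k) * p_k(x). -/
open Polynomial

/-!
Let `F(x, t) = exp (x (1 - cosh t)) = ∑ aₘ(x) tᵐ / m!`. The chain rule gives
`∂ₜ F = -x sinh t · F`; then `U = ∂ₓ F - (1 - cosh t) F` satisfies `∂ₜ U = -x sinh t · U` and
`U(0) = 0`, so `∂ₓ F = (1 - cosh t) F`. With `cosh² - sinh² = 1` these two equations give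
`∂ₜ² F = x² ∂ₓ² F + x (1 - 2x) ∂ₓ F - x F`, i.e. `aₘ₊₂` is obtained from `aₘ` by the operator of
the recurrence; as `a₀ = 1` and `a₁ = 0`, we get `a₂ₙ = pₙ` and `a₂ₙ₊₁ = 0`. The coefficient of
`t²ⁿ / (2n)!` in `∂ₓ F = F - F cosh t` is then the claimed identity.
-/

open Finset Nat

theorem Finset.sum_range_two_mul_add_one_of_odd_eq_zero {M : Type*} [AddCommMonoid M]
    (f : ℕ → M) (hf : ∀ k, f (2 * k + 1) = 0) (n : ℕ) :
    ∑ j ∈ range (2 * n + 1), f j = ∑ k ∈ range (n + 1), f (2 * k) := by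
  induction n with
  | zero => simp
  | succ n ih =>
    rw [show 2 * (n + 1) + 1 = 2 * n + 1 + 1 + 1 by ring, sum_range_succ, sum_range_succ, ih, hf,
      add_zero, sum_range_succ _ (n + 1), mul_add, mul_one]

noncomputable section

namespace PowerSeries

section General

variable {A : Type*} [CommRing A]

def egfCoeff (n : ℕ) : A⟦X⟧ →ₗ[A] A := n ! • coeff n

theorem egfCoeff_apply (n : ℕ) (F : A⟦X⟧) : egfCoeff n F = n ! • coeff n F := rfl

@[simp] theorem egfCoeff_zero (F : A⟦X⟧) : egfCoeff 0 F = constantCoeff F := by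
  simp [egfCoeff_apply]

theorem egfCoeff_C_mul (n : ℕ) (a : A) (F : A⟦X⟧) : egfCoeff n (C a * F) = a * egfCoeff n F := by
  simp only [egfCoeff_apply, coeff_C_mul, mul_smul_comm]

theorem egfCoeff_derivative (n : ℕ) (F : A⟦X⟧) :
    egfCoeff n (d⁄dX A F) = egfCoeff (n + 1) F := by
  simp only [egfCoeff_apply, coeff_derivative, factorial_succ, mul_comm (n + 1), mul_smul]
  rw [nsmul_eq_mul _ (coeff (n + 1) F), mul_comm, Nat.cast_add_one]

theorem egfCoeff_mul (n : ℕ) (F G : A⟦X⟧) :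
    egfCoeff n (F * G) =
      ∑ j ∈ range (n + 1), n.choose j • (egfCoeff j F * egfCoeff (n - j) G) := by
  simp only [egfCoeff_apply, coeff_mul, Nat.sum_antidiagonal_eq_sum_range_succ_mk, smul_sum]
  refine sum_congr rfl fun j hj => ?_
  rw [smul_mul_smul_comm, smul_smul, ← mul_assoc,
    choose_mul_factorial_mul_factorial (mem_range_succ_iff.mp hj)]

theorem eq_zero_of_derivative_eq_mul [IsAddTorsionFree A] {U a : A⟦X⟧}
    (hU : d⁄dX A U = a * U) (h0 : constantCoeff U = 0) : U = 0 := by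
  ext n
  induction n using Nat.strong_induction_on with
  | _ n ih =>
  rcases n with _ | n
  · simpa using h0
  have h := congrArg (coeff n) hU
  rw [coeff_derivative, coeff_mul, sum_eq_zero fun p hp => by
    rw [ih p.2 (by have := mem_antidiagonal.mp hp; omega), map_zero, mul_zero]] at h
  rw [← Nat.cast_add_one, mul_comm, ← nsmul_eq_mul, nsmul_eq_zero_iff] at h
  simpa using h

variable {R : Type*} [CommRing R] [Algebra R A]

def coeffwiseDerivation (D : Derivation R A A) : Derivation R A⟦X⟧ A⟦X⟧ :=
  Derivation.mk'
    { toFun F := mk fun n => D (coeff n F)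
      map_add' F G := by ext; simp
      map_smul' r F := by ext; simp }
    fun F G => by
      ext n
      simp only [LinearMap.coe_mk, AddHom.coe_mk, coeff_mk, smul_eq_mul, map_add, coeff_mul,
        map_sum, Derivation.leibniz, sum_add_distrib]
      congr 1
      rw [← Nat.sum_antidiagonal_swap]
      simp

@[simp] theorem coeff_coeffwiseDerivation (D : Derivation R A A) (n : ℕ) (F : A⟦X⟧) :
    coeff n (coeffwiseDerivation D F) = D (coeff n F) := by
  simp [coeffwiseDerivation]

theorem coeffwiseDerivation_C (D : Derivation R A A) (a : A) :
    coeffwiseDerivation D (C a) = C (D a) := by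
  ext n
  simp only [coeff_coeffwiseDerivation, coeff_C]
  split_ifs <;> simp

@[simp] theorem constantCoeff_coeffwiseDerivation (D : Derivation R A A) (F : A⟦X⟧) :
    constantCoeff (coeffwiseDerivation D F) = D (constantCoeff F) := by
  rw [← coeff_zero_eq_constantCoeff_apply, ← coeff_zero_eq_constantCoeff_apply,
    coeff_coeffwiseDerivation]

theorem egfCoeff_coeffwiseDerivation (D : Derivation R A A) (n : ℕ) (F : A⟦X⟧) :
    egfCoeff n (coeffwiseDerivation D F) = D (egfCoeff n F) := by
  simp [egfCoeff_apply]

theorem derivative_coeffwiseDerivation (D : Derivation R A A) (F : A⟦X⟧) :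
    d⁄dX A (coeffwiseDerivation D F) = coeffwiseDerivation D (d⁄dX A F) := by
  ext n
  simp [coeff_derivative, mul_comm]

end General

section Hyperbolic

variable (A : Type*) [CommRing A] [Algebra ℚ A]

def cosh : A⟦X⟧ := mk fun n => if Even n then algebraMap ℚ A (1 / n !) else 0

def sinh : A⟦X⟧ := mk fun n => if Odd n then algebraMap ℚ A (1 / n !) else 0

variable {A}

theorem algebraMap_one_div_factorial_succ_mul (n : ℕ) :
    algebraMap ℚ A (1 / (n + 1)!) * (n + 1) = algebraMap ℚ A (1 / n !) := by
  rw [← Nat.cast_add_one, ← map_natCast (algebraMap ℚ A), ← map_mul]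
  congr 1
  push_cast [factorial_succ]
  field_simp

theorem derivative_cosh : d⁄dX A (cosh A) = sinh A := by
  ext n
  simp only [cosh, sinh, coeff_derivative, coeff_mk, Nat.even_add_one, Nat.not_even_iff_odd]
  split_ifs
  · exact algebraMap_one_div_factorial_succ_mul n
  · exact zero_mul _

theorem derivative_sinh : d⁄dX A (sinh A) = cosh A := by
  ext n
  simp only [cosh, sinh, coeff_derivative, coeff_mk, Nat.odd_add_one, Nat.not_odd_iff_even]
  split_ifs
  · exact algebraMap_one_div_factorial_succ_mul n
  · exact zero_mul _

@[simp] theorem constantCoeff_cosh : constantCoeff (cosh A) = 1 := by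
  simp [cosh, ← coeff_zero_eq_constantCoeff_apply]

@[simp] theorem constantCoeff_sinh : constantCoeff (sinh A) = 0 := by
  simp [sinh, ← coeff_zero_eq_constantCoeff_apply]

theorem cosh_sq_sub_sinh_sq [IsAddTorsionFree A] : cosh A ^ 2 - sinh A ^ 2 = 1 := by
  refine derivative.ext ?_ (by simp)
  simp only [pow_two, map_sub, Derivation.leibniz, derivative_cosh, derivative_sinh, smul_eq_mul,
    Derivation.map_one_eq_zero]
  ring

theorem egfCoeff_cosh (n : ℕ) : egfCoeff n (cosh A) = if Even n then 1 else 0 := by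
  simp only [egfCoeff_apply, cosh, coeff_mk]
  split_ifs
  · rw [nsmul_eq_mul, ← map_natCast (algebraMap ℚ A), ← map_mul]
    simp [n.factorial_ne_zero]
  · exact smul_zero _

theorem coeffwiseDerivation_cosh (D : Derivation ℚ A A) :
    coeffwiseDerivation D (cosh A) = 0 := by
  ext n
  simp only [cosh, coeff_coeffwiseDerivation, coeff_mk]
  split_ifs <;> simp

theorem coeffwiseDerivation_sinh (D : Derivation ℚ A A) :
    coeffwiseDerivation D (sinh A) = 0 := by
  ext n
  simp only [sinh, coeff_coeffwiseDerivation, coeff_mk]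
  split_ifs <;> simp

theorem egfCoeff_mul_cosh_of_odd_eq_zero (F : A⟦X⟧)
    (hF : ∀ k, egfCoeff (2 * k + 1) F = 0) (n : ℕ) :
    egfCoeff (2 * n) (F * cosh A) =
      ∑ k ∈ range (n + 1), (2 * n).choose (2 * k) • egfCoeff (2 * k) F := by
  rw [egfCoeff_mul, sum_range_two_mul_add_one_of_odd_eq_zero _ (by simp [hF])]
  refine sum_congr rfl fun k _ => ?_
  have heven : Even (2 * n - 2 * k) := by
    rw [← Nat.mul_sub]; exact even_two_mul _
  rw [egfCoeff_cosh, if_pos heven, mul_one]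

end Hyperbolic

section GeneratingSeries

variable {A : Type*} [CommRing A] [Algebra ℚ A] (x : A)

/-- The generating function `exp (-2x sinh² (t/2)) = exp (x (1 - cosh t))` of `KLpoly`. -/
def klSeries : A⟦X⟧ := (exp A).subst (C x * (1 - cosh A))

theorem constantCoeff_C_mul_one_sub_cosh : constantCoeff (C x * (1 - cosh A)) = 0 := by
  simp

theorem hasSubst_C_mul_one_sub_cosh : HasSubst (C x * (1 - cosh A)) :=
  HasSubst.of_constantCoeff_zero' (constantCoeff_C_mul_one_sub_cosh x)

theorem constantCoeff_klSeries : constantCoeff (klSeries x) = 1 := by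
  have h := constantCoeff_subst_eq_zero (constantCoeff_C_mul_one_sub_cosh x) (exp A - 1) (by simp)
  rw [← coe_substAlgHom (hasSubst_C_mul_one_sub_cosh x), map_sub, map_one, map_sub, map_one,
    sub_eq_zero] at h
  rw [klSeries, ← coe_substAlgHom (hasSubst_C_mul_one_sub_cosh x)]
  exact h

theorem derivative_klSeries : d⁄dX A (klSeries x) = -(C x * sinh A) * klSeries x := by
  rw [klSeries, derivative_subst (hasSubst_C_mul_one_sub_cosh x), derivative_exp]
  simp only [Derivation.leibniz, map_sub, Derivation.map_one_eq_zero, derivative_cosh,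
    derivative_C, smul_eq_mul]
  ring

theorem egfCoeff_one_klSeries : egfCoeff 1 (klSeries x) = 0 := by
  rw [← egfCoeff_derivative, derivative_klSeries]
  simp

variable [IsAddTorsionFree A] (D : Derivation ℚ A A) {x}

theorem coeffwiseDerivation_klSeries (hx : D x = 1) :
    coeffwiseDerivation D (klSeries x) = (1 - cosh A) * klSeries x := by
  rw [← sub_eq_zero]
  refine eq_zero_of_derivative_eq_mul (a := -(C x * sinh A)) ?_ ?_
  · simp only [map_sub, derivative_coeffwiseDerivation, derivative_klSeries, map_neg,
      Derivation.leibniz, smul_eq_mul, coeffwiseDerivation_sinh, coeffwiseDerivation_C, hx, map_one,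
      Derivation.map_one_eq_zero, derivative_cosh]
    ring
  · simp [constantCoeff_klSeries]

theorem derivative_derivative_klSeries (hx : D x = 1) :
    d⁄dX A (d⁄dX A (klSeries x)) =
      C (x ^ 2) * coeffwiseDerivation D (coeffwiseDerivation D (klSeries x)) +
        C (x * (1 - 2 * x)) * coeffwiseDerivation D (klSeries x) - C x * klSeries x := by
  simp only [derivative_klSeries, coeffwiseDerivation_klSeries D hx, Derivation.leibniz,
    derivative_sinh, derivative_C, map_sub, map_one, coeffwiseDerivation_cosh, map_mul, map_pow,
    map_neg, map_ofNat, smul_eq_mul, Derivation.map_one_eq_zero]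
  linear_combination (-(C x) ^ 2 * klSeries x) * cosh_sq_sub_sinh_sq (A := A)

theorem egfCoeff_klSeries_add_two (hx : D x = 1) (n : ℕ) :
    egfCoeff (n + 2) (klSeries x) =
      x ^ 2 * D (D (egfCoeff n (klSeries x))) + x * (1 - 2 * x) * D (egfCoeff n (klSeries x)) -
        x * egfCoeff n (klSeries x) := by
  rw [← egfCoeff_derivative, ← egfCoeff_derivative, derivative_derivative_klSeries D hx]
  simp only [map_sub, map_add, egfCoeff_C_mul, egfCoeff_coeffwiseDerivation]

end GeneratingSeries

end PowerSeries

end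

section

open PowerSeries

theorem egfCoeff_klSeries_X (n : ℕ) :
    egfCoeff (2 * n) (klSeries (Polynomial.X : ℚ[X])) = (KLpoly n).map (Int.castRingHom ℚ) ∧
      egfCoeff (2 * n + 1) (klSeries (Polynomial.X : ℚ[X])) = 0 := by
  induction n with
  | zero => simp [constantCoeff_klSeries, egfCoeff_one_klSeries, KLpoly]
  | succ n ih =>
    rw [show 2 * (n + 1) = 2 * n + 2 by ring, show 2 * n + 2 + 1 = 2 * n + 1 + 2 by ring,
      egfCoeff_klSeries_add_two derivative' derivative_X,
      egfCoeff_klSeries_add_two derivative' derivative_X, ih.1, ih.2]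
    simp [KLpoly, derivative_map]

end

theorem KLpoly_derivative_eq_general (n : ℕ) :
    derivative (KLpoly n) =
      -∑ k ∈ Finset.range n, (Nat.choose (2 * n) (2 * k) : ℤ) • KLpoly k := by
  apply Polynomial.map_injective (Int.castRingHom ℚ) Int.cast_injective
  have h := congrArg (PowerSeries.egfCoeff (2 * n))
    (PowerSeries.coeffwiseDerivation_klSeries derivative' (x := (X : ℚ[X])) derivative_X)
  rw [PowerSeries.egfCoeff_coeffwiseDerivation, sub_mul, one_mul, mul_comm (PowerSeries.cosh _),
    map_sub,
    PowerSeries.egfCoeff_mul_cosh_of_odd_eq_zero _ (fun k => (egfCoeff_klSeries_X k).2),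
    sum_range_succ, Nat.choose_self, one_smul, sub_add_cancel_right] at h
  simp only [(egfCoeff_klSeries_X _).1, derivative'_apply] at h
  rw [← derivative_map, h]
  simp [Polynomial.map_sum, nsmul_eq_mul]

theorem KLpoly_derivative_eq (n : ℕ) (hn : 1 ≤ n) :
    derivative (KLpoly n) =
      -∑ k ∈ Finset.range n, (Nat.choose (2 * n) (2 * k) : ℤ) • KLpoly k :=
  KLpoly_derivative_eq_general n
end

section
/- Define polynomials p_n by p_0(x) = 1 and p_{n+1}(x) = x^2 * p_n''(x) + x*(1 - 2x) * p_n'(x) - x * p_n(x). Then for all n >= 0 and all x, y: p_n(x+y) = sum over k from 0 to n of binomial(2n, 2k) * p_k(x) * p_{n-k}(y). -/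
open Polynomial

/-!
Put `g(t) = 1 - cosh t = -2 sinh² (t / 2)`, so that `∑ₙ pₙ(x) t²ⁿ / (2n)! = exp (x g(t))`.
We use this coefficientwise in `x`: the coefficient of `xʲ` in `pₙ` is `(2n)! [t²ⁿ] gʲ / j!`.
That follows by induction from `g'' = g - 1` and `g'² = g² - 2g`, which turn `∂ₜ²` of
`xʲ gʲ / j!` into the operator producing `pₙ₊₁` from `pₙ`. Since the exponent is linear in `x`,
`exp ((x + y) g) = exp (x g) exp (y g)`, i.e. `gᵃ / a! · gᵇ / b! = C(a + b, a) gᵃ⁺ᵇ / (a + b)!`;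
as `g` is even, comparing the coefficients of `t²ⁿ` yields the binomial convolution with
weights `C(2n, 2k)`.
-/

open scoped PowerSeries
open Finset

theorem Polynomial.aeval_add_eq_sum_range_sum_range {R S : Type*} [CommSemiring R]
    [CommSemiring S] [Algebra R S] {p : R[X]} {N : ℕ} (hp : p.natDegree < N) (x y : S) :
    aeval (x + y) p =
      ∑ a ∈ range N, ∑ b ∈ range N, ((a + b).choose a * p.coeff (a + b)) • (x ^ a * y ^ b) := by
  set q := p.map (algebraMap R S)
  have hq : q.natDegree < N := natDegree_map_le.trans_lt hp
  rw [aeval_def, ← eval_map, ← taylor_eval,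
    eval_eq_sum_range' ((natDegree_taylor q y).trans_lt hq)]
  refine sum_congr rfl fun a _ => ?_
  rw [taylor_coeff, eval_eq_sum_range'
    (((natDegree_hasseDeriv_le _ _).trans (Nat.sub_le _ _)).trans_lt hq), sum_mul]
  refine sum_congr rfl fun b _ => ?_
  rw [hasseDeriv_coeff, coeff_map, Algebra.smul_def, add_comm b a]
  simp only [map_mul, map_natCast]
  ring

theorem Finset.sum_range_two_mul_add_one_eq_of_odd {M : Type*} [AddCommMonoid M] (n : ℕ)
    {u : ℕ → M} (hu : ∀ i, Odd i → u i = 0) :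
    ∑ i ∈ range (2 * n + 1), u i = ∑ k ∈ range (n + 1), u (2 * k) := by
  induction n with
  | zero => simp
  | succ n ih =>
    rw [show 2 * (n + 1) + 1 = 2 * n + 1 + 1 + 1 by ring, sum_range_succ, sum_range_succ, ih,
      hu _ (odd_two_mul_add_one n), add_zero, sum_range_succ _ (n + 1), mul_add_one]

namespace PowerSeries

open Nat

theorem rescale_C {R : Type*} [CommSemiring R] (a r : R) : rescale a (C r) = C r := by
  ext (_ | n) <;> simp [coeff_rescale, coeff_C]

theorem coeff_eq_zero_of_rescale_neg_one_eq {R : Type*} [CommRing R] [IsAddTorsionFree R]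
    {f : R⟦X⟧} (hf : rescale (-1) f = f) {n : ℕ} (hn : Odd n) : coeff n f = 0 := by
  have h := congrArg (coeff n) hf
  rw [coeff_rescale, hn.neg_one_pow, neg_one_mul, eq_comm] at h
  exact self_eq_neg.1 h

section CommSemiring

variable {R : Type*} [CommSemiring R]

noncomputable def expCoeff (n : ℕ) : R⟦X⟧ →ₗ[R] R := (n ! : R) • coeff n

theorem expCoeff_apply (n : ℕ) (f : R⟦X⟧) : expCoeff n f = n ! * coeff n f := rfl

theorem expCoeff_derivative (n : ℕ) (f : R⟦X⟧) :
    expCoeff n (d⁄dX R f) = expCoeff (n + 1) f := by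
  rw [expCoeff_apply, expCoeff_apply, coeff_derivative, factorial_succ]
  push_cast
  ring

end CommSemiring

section Field

variable {K : Type*} [Field K] [CharZero K]

theorem expCoeff_two_mul_mul {f : K⟦X⟧} (hf : ∀ i, Odd i → coeff i f = 0) (g : K⟦X⟧) (n : ℕ) :
    expCoeff (2 * n) (f * g) =
      ∑ k ∈ range (n + 1),
        ((2 * n).choose (2 * k) : K) * expCoeff (2 * k) f * expCoeff (2 * (n - k)) g := by
  rw [expCoeff_apply, coeff_mul, Nat.sum_antidiagonal_eq_sum_range_succ_mk, mul_sum,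
    sum_range_two_mul_add_one_eq_of_odd n (fun i hi => by simp [hf i hi])]
  refine sum_congr rfl fun k hk => ?_
  have hkn : k ≤ n := Nat.lt_succ_iff.mp (mem_range.mp hk)
  have h₁ : ((2 * k)! : K) ≠ 0 := cast_ne_zero.2 (factorial_ne_zero _)
  have h₂ : ((2 * (n - k))! : K) ≠ 0 := cast_ne_zero.2 (factorial_ne_zero _)
  rw [expCoeff_apply, expCoeff_apply, cast_choose K (show 2 * k ≤ 2 * n by omega),
    show 2 * n - 2 * k = 2 * (n - k) by omega]
  field_simp

end Field

theorem derivative_rescale_exp (a : ℚ) :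
    d⁄dX ℚ (rescale a (exp ℚ)) = C a * rescale a (exp ℚ) := by
  ext n
  simp [coeff_derivative, coeff_rescale, factorial_succ, pow_succ]
  field_simp

theorem exp_mul_rescale_neg_one_exp : exp ℚ * rescale (-1) (exp ℚ) = 1 := by
  simpa using exp_mul_exp_eq_exp_add (1 : ℚ) (-1)

noncomputable def oneSubCosh : ℚ⟦X⟧ := 1 - C (2⁻¹ : ℚ) * (exp ℚ + rescale (-1) (exp ℚ))

theorem derivative_derivative_oneSubCosh :
    d⁄dX ℚ (d⁄dX ℚ oneSubCosh) = oneSubCosh - 1 := by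
  simp [oneSubCosh, derivative_rescale_exp, derivative_exp]

theorem derivative_oneSubCosh_sq :
    d⁄dX ℚ oneSubCosh ^ 2 = oneSubCosh ^ 2 - 2 * oneSubCosh := by
  have h : C (2⁻¹ : ℚ) ^ 2 * 4 = 1 := by
    rw [← map_pow, ← map_ofNat C 4, ← map_mul]
    norm_num
  simp [oneSubCosh, derivative_rescale_exp, derivative_exp]
  linear_combination (-C (2⁻¹ : ℚ) ^ 2 * 4) * exp_mul_rescale_neg_one_exp - h

theorem rescale_neg_one_oneSubCosh : rescale (-1) oneSubCosh = oneSubCosh := by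
  simp [oneSubCosh, rescale_rescale, rescale_C]
  ring

theorem X_sq_dvd_oneSubCosh : X ^ 2 ∣ oneSubCosh := by
  rw [X_pow_dvd_iff]
  intro m hm
  interval_cases m
  · simp only [oneSubCosh, map_sub, map_add, coeff_C_mul, coeff_rescale, coeff_exp, coeff_one]
    norm_num
  · exact coeff_eq_zero_of_rescale_neg_one_eq rescale_neg_one_oneSubCosh odd_one

theorem derivative_derivative_oneSubCosh_pow_succ (j : ℕ) :
    d⁄dX ℚ (d⁄dX ℚ (oneSubCosh ^ (j + 1))) =
      ((j + 1) ^ 2 : ℚ) • oneSubCosh ^ (j + 1) -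
        ((j + 1) * (2 * j + 1) : ℚ) • oneSubCosh ^ j := by
  have hD (m : ℕ) : d⁄dX ℚ (oneSubCosh ^ (m + 1)) =
      (m + 1) • (oneSubCosh ^ m * d⁄dX ℚ oneSubCosh) := by
    rw [Derivation.leibniz_pow, Nat.add_sub_cancel, smul_eq_mul]
  rw [hD, map_nsmul, Derivation.leibniz, derivative_derivative_oneSubCosh]
  simp only [smul_eq_C_mul, map_mul, map_add, map_pow, map_natCast, map_one, map_ofNat]
  rcases j with _ | j
  · simp
  · rw [hD]
    simp only [nsmul_eq_mul, smul_eq_mul]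
    push_cast
    linear_combination ((j + 2) * (j + 1) * oneSubCosh ^ j : ℚ⟦X⟧) * derivative_oneSubCosh_sq

noncomputable def dividedPowOneSubCosh (j : ℕ) : ℚ⟦X⟧ := (j ! : ℚ)⁻¹ • oneSubCosh ^ j

theorem dividedPowOneSubCosh_zero : dividedPowOneSubCosh 0 = 1 := by
  simp [dividedPowOneSubCosh]

theorem rescale_neg_one_dividedPowOneSubCosh (j : ℕ) :
    rescale (-1) (dividedPowOneSubCosh j) = dividedPowOneSubCosh j := by
  simp [dividedPowOneSubCosh, smul_eq_C_mul, rescale_C, rescale_neg_one_oneSubCosh]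

theorem X_pow_dvd_dividedPowOneSubCosh (j : ℕ) : X ^ (2 * j) ∣ dividedPowOneSubCosh j := by
  rw [dividedPowOneSubCosh, smul_eq_C_mul, pow_mul]
  exact dvd_mul_of_dvd_right (pow_dvd_pow_of_dvd X_sq_dvd_oneSubCosh j) _

theorem dividedPowOneSubCosh_mul (a b : ℕ) :
    dividedPowOneSubCosh a * dividedPowOneSubCosh b =
      ((a + b).choose a : ℚ) • dividedPowOneSubCosh (a + b) := by
  have h := add_choose_mul_factorial_mul_factorial b a
  rw [add_comm b a] at h
  have hc : ((a + b).choose a : ℚ) ≠ 0 := cast_ne_zero.2 (choose_pos (le_add_right le_rfl)).ne'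
  rw [dividedPowOneSubCosh, dividedPowOneSubCosh, dividedPowOneSubCosh, smul_mul_smul_comm,
    smul_smul, ← pow_add, ← h]
  congr 1
  push_cast
  field_simp

theorem derivative_derivative_dividedPowOneSubCosh_succ (j : ℕ) :
    d⁄dX ℚ (d⁄dX ℚ (dividedPowOneSubCosh (j + 1))) =
      ((j + 1) ^ 2 : ℚ) • dividedPowOneSubCosh (j + 1) -
        (2 * j + 1 : ℚ) • dividedPowOneSubCosh j := by
  rw [dividedPowOneSubCosh, dividedPowOneSubCosh, Derivation.map_smul, Derivation.map_smul,
    derivative_derivative_oneSubCosh_pow_succ, smul_sub, smul_smul, smul_smul, smul_smul,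
    smul_smul, factorial_succ]
  congr 2 <;> push_cast <;> field_simp

theorem expCoeff_dividedPowOneSubCosh_of_lt {n j : ℕ} (h : n < j) :
    expCoeff (2 * n) (dividedPowOneSubCosh j) = 0 := by
  rw [expCoeff_apply, X_pow_dvd_iff.1 (X_pow_dvd_dividedPowOneSubCosh j) _ (by omega), mul_zero]

theorem expCoeff_dividedPowOneSubCosh_succ_succ (n j : ℕ) :
    expCoeff (2 * (n + 1)) (dividedPowOneSubCosh (j + 1)) =
      (j + 1) ^ 2 * expCoeff (2 * n) (dividedPowOneSubCosh (j + 1)) -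
        (2 * j + 1) * expCoeff (2 * n) (dividedPowOneSubCosh j) := by
  rw [show 2 * (n + 1) = 2 * n + 1 + 1 by ring, ← expCoeff_derivative, ← expCoeff_derivative,
    derivative_derivative_dividedPowOneSubCosh_succ, map_sub, map_smul, map_smul, smul_eq_mul,
    smul_eq_mul]

theorem choose_mul_expCoeff_dividedPowOneSubCosh_add (n a b : ℕ) :
    ((a + b).choose a : ℚ) * expCoeff (2 * n) (dividedPowOneSubCosh (a + b)) =
      ∑ k ∈ range (n + 1), ((2 * n).choose (2 * k) : ℚ) *
        expCoeff (2 * k) (dividedPowOneSubCosh a) *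
          expCoeff (2 * (n - k)) (dividedPowOneSubCosh b) := by
  rw [← smul_eq_mul, ← map_smul, ← dividedPowOneSubCosh_mul]
  exact expCoeff_two_mul_mul
    (fun i hi => coeff_eq_zero_of_rescale_neg_one_eq (rescale_neg_one_dividedPowOneSubCosh a) hi)
    _ n

end PowerSeries

theorem coeff_KLpoly_succ_zero (n : ℕ) : (KLpoly (n + 1)).coeff 0 = 0 := by
  simp [KLpoly, mul_assoc]

theorem coeff_KLpoly_succ_succ (n j : ℕ) :
    (KLpoly (n + 1)).coeff (j + 1) =
      (j + 1) ^ 2 * (KLpoly n).coeff (j + 1) - (2 * j + 1) * (KLpoly n).coeff j := by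
  rcases j with _ | j
  · simp [KLpoly, coeff_derivative, mul_sub, sub_mul, coeff_X_pow_mul', mul_assoc]
  · simp [KLpoly, coeff_derivative, mul_sub, sub_mul, coeff_X_pow_mul', mul_assoc, coeff_X_mul]
    ring

open PowerSeries in
theorem coeff_KLpoly (n j : ℕ) :
    ((KLpoly n).coeff j : ℚ) = expCoeff (2 * n) (dividedPowOneSubCosh j) := by
  induction n generalizing j with
  | zero =>
    rcases j with _ | j
    · simp [KLpoly, dividedPowOneSubCosh_zero, expCoeff_apply]
    · rw [expCoeff_dividedPowOneSubCosh_of_lt j.succ_pos]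
      simp [KLpoly, Polynomial.coeff_one]
  | succ n ih =>
    rcases j with _ | j
    · simp [coeff_KLpoly_succ_zero, dividedPowOneSubCosh_zero, expCoeff_apply]
    · rw [coeff_KLpoly_succ_succ, expCoeff_dividedPowOneSubCosh_succ_succ, ← ih, ← ih]
      push_cast
      ring

theorem natDegree_KLpoly_le (n : ℕ) : (KLpoly n).natDegree ≤ n := by
  refine natDegree_le_iff_coeff_eq_zero.2 fun j hj => ?_
  exact_mod_cast (coeff_KLpoly n j).trans
    (PowerSeries.expCoeff_dividedPowOneSubCosh_of_lt (by exact_mod_cast hj))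

theorem sum_choose_mul_coeff_KLpoly_mul_coeff_KLpoly (n a b : ℕ) :
    ∑ k ∈ range (n + 1),
        ((2 * n).choose (2 * k) : ℤ) * (KLpoly k).coeff a * (KLpoly (n - k)).coeff b =
      (a + b).choose a * (KLpoly n).coeff (a + b) := by
  have h := PowerSeries.choose_mul_expCoeff_dividedPowOneSubCosh_add n a b
  simp only [← coeff_KLpoly] at h
  exact_mod_cast h.symm

theorem KLpoly_add (n : ℕ) (x y : ℝ) :
    Polynomial.aeval (x + y) (KLpoly n) =
      ∑ k ∈ Finset.range (n + 1),
        (Nat.choose (2 * n) (2 * k) : ℝ) *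
          (Polynomial.aeval x (KLpoly k)) * (Polynomial.aeval y (KLpoly (n - k))) := by
  have hdeg {k : ℕ} (hk : k ≤ n) : (KLpoly k).natDegree < n + 1 :=
    (natDegree_KLpoly_le k).trans_lt (Nat.lt_succ_of_le hk)
  rw [aeval_add_eq_sum_range_sum_range (hdeg le_rfl)]
  simp_rw [← sum_choose_mul_coeff_KLpoly_mul_coeff_KLpoly, sum_smul]
  rw [sum_congr rfl fun a _ => sum_comm, sum_comm]
  refine sum_congr rfl fun k hk => ?_
  have hkn : k ≤ n := Nat.lt_succ_iff.1 (mem_range.1 hk)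
  rw [aeval_eq_sum_range' (hdeg hkn), aeval_eq_sum_range' (hdeg (Nat.sub_le n k)), mul_assoc,
    sum_mul_sum, mul_sum]
  refine sum_congr rfl fun a _ => ?_
  rw [mul_sum]
  refine sum_congr rfl fun b _ => ?_
  simp only [zsmul_eq_mul, Int.cast_mul, Int.cast_natCast]
  ring
end

section
/- Define polynomials p_n by p_0(x) = 1 and p_{n+1}(x) = x^2 * p_n''(x) + x*(1 - 2x) * p_n'(x) - x * p_n(x). Then for every positive integer n, the leading coefficient of p_n (the coefficient of x^n) equals (-1)^n * (2n-1)!!, the double factorial 1*3*5*...*(2n-1). -/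
open Polynomial

lemma KLpoly_succ (n : ℕ) : KLpoly (n+1) =
    X ^ 2 * derivative (derivative (KLpoly n)) +
      (X * derivative (KLpoly n) - X ^ 2 * (2 * derivative (KLpoly n))) - X * KLpoly n := by
  rw [KLpoly]; ring

lemma KLpoly_coeff_zero : ∀ n k, n < k → (KLpoly n).coeff k = 0 := by
  intro n
  induction n with
  | zero =>
    intro k hk
    rw [KLpoly]
    rw [coeff_one, if_neg (by omega)]
  | succ n ih =>
    intro k hk
    obtain ⟨m, rfl⟩ : ∃ m, k = m + 2 := ⟨k - 2, by omega⟩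
    rw [KLpoly_succ]
    have h1 : (KLpoly n).coeff (m + 2) = 0 := ih _ (by omega)
    have h2 : (KLpoly n).coeff (m + 1 + 1) = 0 := ih _ (by omega)
    have h0 : (KLpoly n).coeff (1 + m) = 0 := ih _ (by omega)
    have h3 : (KLpoly n).coeff (m + 1 + 1 + 1) = 0 := ih _ (by omega)
    simp only [coeff_add, coeff_sub, coeff_X_pow_mul, coeff_smul,
      show m + 2 = m + 1 + 1 from rfl, coeff_X_mul, coeff_derivative, coeff_ofNat_mul,
      h0, h1, h2, h3]
    have h4 : (KLpoly n).coeff (m + 1) = 0 := ih _ (by omega)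
    simp [h4]

lemma KLpoly_step (m : ℕ) :
    (KLpoly (m+2)).coeff (m+2) = -(2*(m:ℤ)+3) * (KLpoly (m+1)).coeff (m+1) := by
  rw [KLpoly_succ]
  have h1 : (KLpoly (m+1)).coeff (m + 2) = 0 := KLpoly_coeff_zero _ _ (by omega)
  have h2 : (KLpoly (m+1)).coeff (m + 1 + 1) = 0 := KLpoly_coeff_zero _ _ (by omega)
  have h3 : (KLpoly (m+1)).coeff (m + 1 + 1 + 1) = 0 := KLpoly_coeff_zero _ _ (by omega)
  simp only [coeff_sub, coeff_add, coeff_X_pow_mul, show m + 2 = m + 1 + 1 from rfl,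
    coeff_X_mul, coeff_derivative, coeff_ofNat_mul, h1, h2, h3]
  push_cast
  ring

theorem KLpoly_leading_coeff (n : ℕ) (hn : 0 < n) :
    (KLpoly n).coeff n = (-1) ^ n * (Nat.doubleFactorial (2 * n - 1) : ℤ) := by
  induction n with
  | zero => omega
  | succ n ih =>
    rcases Nat.eq_zero_or_pos n with rfl | hpos
    · show (KLpoly 1).coeff 1 = _
      rw [KLpoly_succ]
      norm_num [KLpoly, Nat.doubleFactorial]
    · obtain ⟨m, rfl⟩ : ∃ m, n = m + 1 := ⟨n - 1, by omega⟩
      rw [KLpoly_step, ih (by omega)]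
      have hd : 2 * (m + 1 + 1) - 1 = (2 * (m + 1) - 1) + 2 := by omega
      rw [hd, Nat.doubleFactorial_add_two]
      have : ((2 * (m + 1) - 1 : ℕ) : ℤ) = 2 * m + 1 := by push_cast [show 1 ≤ 2*(m+1) by omega]; ring
      push_cast [this]
      ring
end

section
/- For every n >= 1, the coefficient a_{n,k} given by a_{n,k} = (1/k!) * sum over r from 0 to k of ((-1)^r / 2^r) * binomial(k,r) * sum over j from 0 to k-r of ((-1)^j / 2^j) * binomial(k-r, j) * (r-j)^(2n) is an integer for each k = 1, ..., n. -/
/-!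
The double sum is the linear functional `T^d ↦ d^(2n)` on Laurent polynomials applied to
`(1 - (T + T⁻¹)/2)^k = (-1/2)^k T^(-k) (1 - T)^(2k)`, so it equals `(-1/2)^k g(n, k)` with
`g(n, k) = ∑ (-1)^i C(2k, i) (i - k)^(2n)`, the `2k`-th central difference of `x^(2n)` at `0`.
This satisfies `g(n+1, k+1) = (k+1)^2 g(n, k+1) + 2(k+1)(2k+1) g(n, k)`, and induction on this
recurrence shows `2^k k! ∣ g(n, k)`.
-/

open Finset LaurentPolynomial

theorem Nat.add_two_choose_mul_mul_sub (m i : ℕ) :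
    (m + 2).choose (i + 1) * (i + 1) * (m + 1 - i) = (m + 2) * (m + 1) * m.choose i := by
  rw [← Nat.add_one_mul_choose_eq, mul_assoc, ← Nat.choose_mul_succ_eq]
  ring

-- `(2k)!` times the central factorial number `T(2n, 2k)`.
def centralDiff (n k : ℕ) : ℤ :=
  ∑ i ∈ range (2 * k + 1), (-1) ^ i * ((2 * k).choose i : ℤ) * ((i : ℤ) - k) ^ (2 * n)

theorem centralDiff_zero_succ (k : ℕ) : centralDiff 0 (k + 1) = 0 := by
  simpa [centralDiff] using Int.alternating_sum_range_choose (n := 2 * (k + 1))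

theorem centralDiff_succ_succ (n k : ℕ) :
    centralDiff (n + 1) (k + 1) =
      ((k : ℤ) + 1) ^ 2 * centralDiff n (k + 1) +
        2 * ((k : ℤ) + 1) * (2 * k + 1) * centralDiff n k := by
  -- `(i - k - 1)^2 = (k + 1)^2 + i (i - 2k - 2)`, and the second sum shifts to `centralDiff n k`
  have hsplit : centralDiff (n + 1) (k + 1) - ((k : ℤ) + 1) ^ 2 * centralDiff n (k + 1) =
      ∑ i ∈ range (2 * k + 2 + 1), (-1) ^ i * ((2 * k + 2).choose i : ℤ) *
        ((i : ℤ) - (k + 1)) ^ (2 * n) * (i * (i - (2 * k + 2))) := by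
    rw [centralDiff, centralDiff, mul_sum, ← sum_sub_distrib,
      show 2 * (k + 1) = 2 * k + 2 by ring]
    refine sum_congr rfl fun i _ => ?_
    push_cast
    ring
  have hshift : ∀ i ∈ range (2 * k + 1), (-1) ^ (i + 1) * ((2 * k + 2).choose (i + 1) : ℤ) *
      ((↑(i + 1) : ℤ) - (k + 1)) ^ (2 * n) * (↑(i + 1) * (↑(i + 1) - (2 * k + 2))) =
      2 * ((k : ℤ) + 1) * (2 * k + 1) *
        ((-1) ^ i * ((2 * k).choose i : ℤ) * ((i : ℤ) - k) ^ (2 * n)) := by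
    intro i hi
    have hchoose := Nat.add_two_choose_mul_mul_sub (2 * k) i
    have hi : i ≤ 2 * k + 1 := by have := mem_range.mp hi; omega
    zify [hi] at hchoose
    push_cast
    linear_combination (-1) ^ i * ((i : ℤ) - k) ^ (2 * n) * hchoose
  rw [sub_eq_iff_eq_add'.mp hsplit]
  congr 1
  rw [sum_range_succ', sum_range_succ, sum_congr rfl hshift, ← mul_sum, centralDiff]
  push_cast
  ring

theorem two_pow_mul_factorial_dvd_centralDiff :
    ∀ n k : ℕ, 2 ^ k * (k.factorial : ℤ) ∣ centralDiff n k
  | _, 0 => by simp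
  | 0, k + 1 => by simp [centralDiff_zero_succ]
  | n + 1, k + 1 => by
    rw [centralDiff_succ_succ]
    refine dvd_add (dvd_mul_of_dvd_right (two_pow_mul_factorial_dvd_centralDiff n (k + 1)) _) ?_
    have h : (2 : ℤ) ^ (k + 1) * ((k + 1).factorial : ℤ) =
        2 * (k + 1) * (2 ^ k * k.factorial) := by
      push_cast [Nat.factorial_succ]
      ring
    rw [h, mul_assoc _ _ (centralDiff n k)]
    exact mul_dvd_mul_left _ (dvd_mul_of_dvd_right (two_pow_mul_factorial_dvd_centralDiff n k) _)

namespace LaurentPolynomial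

variable {R : Type*}

section CommSemiring

variable [CommSemiring R]

noncomputable def pairing (w : ℤ → R) : R[T;T⁻¹] →ₗ[R] R :=
  (AddMonoidAlgebra.basis ℤ R).constr R w

theorem pairing_C_mul_T (w : ℤ → R) (a : R) (d : ℤ) : pairing w (C a * T d) = a * w d := by
  rw [← smul_eq_C_mul, map_smul, smul_eq_mul]
  exact congrArg (a * ·) ((AddMonoidAlgebra.basis ℤ R).constr_basis R w d)

theorem trinomial_pow (a b c : R) (k : ℕ) :
    (C a * T 1 + C b * T (-1) + C c) ^ k =
      ∑ r ∈ range (k + 1), ∑ j ∈ range (k - r + 1),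
        C (k.choose r * (k - r).choose j * a ^ r * b ^ j * c ^ (k - r - j) : R) * T (r - j) := by
  rw [add_assoc, add_pow]
  refine sum_congr rfl fun r _ => ?_
  rw [add_pow, mul_sum, sum_mul]
  refine sum_congr rfl fun j _ => ?_
  have hT : (T (r - j) : R[T;T⁻¹]) = T 1 ^ r * T (-1) ^ j := by
    rw [T_pow, T_pow, ← T_add]
    congr 1
    ring
  simp only [hT, map_mul, map_pow, map_natCast, mul_pow]
  ring

end CommSemiring

section CommRing

variable [CommRing R]

theorem T_neg_mul_one_sub_T_pow (k : ℤ) (m : ℕ) :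
    T (-k) * (1 - T 1) ^ m =
      ∑ i ∈ range (m + 1), C ((-1) ^ i * m.choose i : R) * T (i - k) := by
  rw [sub_eq_neg_add, add_pow, mul_sum]
  refine sum_congr rfl fun i _ => ?_
  rw [one_pow, mul_one, neg_pow, T_pow, sub_eq_neg_add, T_add]
  simp only [map_mul, map_pow, map_neg, map_one, map_natCast, mul_one]
  ring

theorem C_mul_T_one_add_C_mul_T_neg_one_sub (a : R) :
    C a * T 1 + C a * T (-1) - C (2 * a) = C a * (T (-1) * (1 - T 1) ^ 2) := by
  have h : (T (-1) * T 1 : R[T;T⁻¹]) = 1 := by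
    rw [← T_add]
    simp
  simp only [map_mul, map_ofNat]
  linear_combination (C a * (2 - T 1)) * h

end CommRing

end LaurentPolynomial

theorem sum_eq_neg_half_pow_mul_centralDiff (n k : ℕ) :
    ∑ r ∈ range (k + 1), ((-1) ^ r / 2 ^ r) * (k.choose r : ℚ) *
      ∑ j ∈ range (k - r + 1), ((-1) ^ j / 2 ^ j) * ((k - r).choose j : ℚ) *
        ((r : ℚ) - j) ^ (2 * n) =
      (-1 / 2) ^ k * centralDiff n k := by
  let w : ℤ → ℚ := fun d => (d : ℚ) ^ (2 * n)
  have hexpand : pairing w ((C (-1 / 2) * T 1 + C (-1 / 2) * T (-1) + C 1) ^ k) =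
      ∑ r ∈ range (k + 1), ((-1) ^ r / 2 ^ r) * (k.choose r : ℚ) *
        ∑ j ∈ range (k - r + 1), ((-1) ^ j / 2 ^ j) * ((k - r).choose j : ℚ) *
          ((r : ℚ) - j) ^ (2 * n) := by
    simp only [trinomial_pow, map_sum, pairing_C_mul_T, mul_sum, w]
    refine sum_congr rfl fun r _ => sum_congr rfl fun j _ => ?_
    push_cast [div_pow]
    ring
  have hfactor : C (-1 / 2) * T 1 + C (-1 / 2) * T (-1) + C 1 =
      C (-1 / 2 : ℚ) * (T (-1) * (1 - T 1) ^ 2) := by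
    rw [← C_mul_T_one_add_C_mul_T_neg_one_sub]
    norm_num [sub_eq_add_neg]
  rw [← hexpand, hfactor, mul_pow, mul_pow, T_pow, ← pow_mul, ← map_pow, mul_neg_one,
    T_neg_mul_one_sub_T_pow, mul_sum, map_sum, centralDiff, Int.cast_sum, mul_sum]
  refine sum_congr rfl fun i _ => ?_
  rw [← mul_assoc, ← map_mul, pairing_C_mul_T]
  push_cast [w]
  ring

theorem coeff_isInt_general (n : ℕ) :
    ∀ k, 1 ≤ k → k ≤ n → ∃ m : ℤ,
      (1 / (Nat.factorial k) : ℚ) *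
        ∑ r ∈ Finset.range (k + 1), ((-1) ^ r / 2 ^ r) * (Nat.choose k r : ℚ) *
          ∑ j ∈ Finset.range (k - r + 1), ((-1) ^ j / 2 ^ j) * (Nat.choose (k - r) j : ℚ) *
            ((r : ℚ) - j) ^ (2 * n) = (m : ℚ) := by
  intro k _ _
  obtain ⟨m, hm⟩ := two_pow_mul_factorial_dvd_centralDiff n k
  refine ⟨(-1) ^ k * m, ?_⟩
  rw [sum_eq_neg_half_pow_mul_centralDiff, hm]
  push_cast
  field_simp
  rw [← mul_pow]
  norm_num [mul_comm]

theorem coeff_isInt (n : ℕ) (hn : 0 < n) :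
    ∀ k, 1 ≤ k → k ≤ n → ∃ m : ℤ,
      (1 / (Nat.factorial k) : ℚ) *
        ∑ r ∈ Finset.range (k + 1), ((-1) ^ r / 2 ^ r) * (Nat.choose k r : ℚ) *
          ∑ j ∈ Finset.range (k - r + 1), ((-1) ^ j / 2 ^ j) * (Nat.choose (k - r) j : ℚ) *
            ((r : ℚ) - j) ^ (2 * n) = (m : ℚ) :=
  coeff_isInt_general n
end

section
/- For every positive integer n, the Euler number E_{2n} equals the (2n)-th derivative at z = 0 of the function z -> sum over k from 1 to n of (1 - cosh z)^k. -/
/-!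
Put `r = 1 - cosh z`. Then `1 / cosh z = 1 / (1 - r) = 1 + r + ⋯ + rⁿ + rⁿ⁺¹ / cosh z`. Since `r`
vanishes to second order at `0`, the remainder `rⁿ⁺¹ / cosh z` vanishes to order `2n + 2`, so
neither it nor the constant `1` contributes to the `2n`-th derivative at `0`.
-/

/-- The Euler numbers, defined via the generating function `1 / cosh t = ∑ Eₙ tⁿ / n!`,
i.e. as derivatives of `1 / cosh` at `0`. -/
noncomputable def eulerNumber (n : ℕ) : ℝ :=
  iteratedDeriv n (fun t : ℝ => 1 / Real.cosh t) 0

open Finset ContDiff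

section VanishingOrder

variable {𝕜 𝔸 : Type*} [NontriviallyNormedField 𝕜] [NormedRing 𝔸] [NormedAlgebra 𝕜 𝔸]
  {f g : 𝕜 → 𝔸} {x : 𝕜} {a b k : ℕ}

theorem iteratedDeriv_fun_mul_eq_zero_of_lt_add (hf : ContDiffAt 𝕜 k f x)
    (hg : ContDiffAt 𝕜 k g x) (hfa : ∀ i < a, iteratedDeriv i f x = 0)
    (hgb : ∀ j < b, iteratedDeriv j g x = 0) (hk : k < a + b) :
    iteratedDeriv k (fun y => f y * g y) x = 0 := by
  rw [iteratedDeriv_fun_mul hf hg]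
  refine sum_eq_zero fun i hi => ?_
  rcases lt_or_ge i a with hia | hai
  · rw [hfa i hia, mul_zero, zero_mul]
  · rw [hgb (k - i) (by grind), mul_zero]

theorem iteratedDeriv_fun_pow_eq_zero_of_lt_mul (hf : ContDiffAt 𝕜 ∞ f x)
    (hfa : ∀ i < a, iteratedDeriv i f x = 0) (m : ℕ) (hk : k < a * m) :
    iteratedDeriv k (fun y => f y ^ m) x = 0 := by
  induction m generalizing k with
  | zero => omega
  | succ m ih =>
    simp_rw [pow_succ]
    have hfk : ContDiffAt 𝕜 k f x := hf.of_le ENat.LEInfty.out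
    exact iteratedDeriv_fun_mul_eq_zero_of_lt_add (hfk.pow m) hfk (fun _ => ih) hfa
      (by rwa [← mul_add_one])

end VanishingOrder

theorem geom_sum_Icc_one_eq {K : Type*} [Field K] {r : K} (hr : r ≠ 1) (n : ℕ) :
    ∑ k ∈ Icc 1 n, r ^ k = -1 + (1 / (1 - r) - r ^ (n + 1) * (1 / (1 - r))) := by
  rw [← Ico_add_one_right_eq_Icc, geom_sum_Ico' hr (by omega)]
  field_simp [sub_ne_zero.2 hr.symm]
  ring

theorem iteratedDeriv_one_sub_cosh_zero {i : ℕ} (hi : i < 2) :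
    iteratedDeriv i (fun z => 1 - Real.cosh z) 0 = 0 := by
  interval_cases i <;> simp [iteratedDeriv_one]

theorem euler_eq_iteratedDeriv (n : ℕ) (hn : 0 < n) :
    eulerNumber (2 * n) =
      iteratedDeriv (2 * n)
        (fun z : ℝ => ∑ k ∈ Finset.Icc 1 n, (1 - Real.cosh z) ^ k) 0 := by
  have hr : ContDiff ℝ ∞ fun z => 1 - Real.cosh z := contDiff_const.sub Real.contDiff_cosh
  have hsech : ContDiff ℝ ∞ fun z => 1 / Real.cosh z :=
    contDiff_const.div Real.contDiff_cosh fun z => (Real.cosh_pos z).ne'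
  have hremainder : iteratedDeriv (2 * n)
      (fun z => (1 - Real.cosh z) ^ (n + 1) * (1 / Real.cosh z)) 0 = 0 :=
    iteratedDeriv_fun_mul_eq_zero_of_lt_add (b := 0)
      ((hr.pow _).of_le ENat.LEInfty.out).contDiffAt (hsech.of_le ENat.LEInfty.out).contDiffAt
      (fun _ => iteratedDeriv_fun_pow_eq_zero_of_lt_mul hr.contDiffAt
        (fun _ => iteratedDeriv_one_sub_cosh_zero) _)
      (by simp) (by omega)
  have hsum (z : ℝ) : ∑ k ∈ Icc 1 n, (1 - Real.cosh z) ^ k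
      = -1 + (1 / Real.cosh z - (1 - Real.cosh z) ^ (n + 1) * (1 / Real.cosh z)) := by
    simpa using geom_sum_Icc_one_eq (r := 1 - Real.cosh z) (by simpa using (Real.cosh_pos z).ne') n
  simp_rw [hsum]
  rw [iteratedDeriv_const_add (by omega),
    iteratedDeriv_fun_sub (hsech.of_le ENat.LEInfty.out).contDiffAt
      (((hr.pow _).mul hsech).of_le ENat.LEInfty.out).contDiffAt,
    hremainder, sub_zero, eulerNumber]
end

section
/- For every positive integer n, B_{2n} evaluated via the formula B_{2n} = (n / (1 - 2^(2n))) * sum over k from 1 to n of (1/(2^k * k)) * sum over r from 0 to k of ((-1)^r / 2^r) * binomial(k,r) * sum over j from 0 to k-r of ((-1)^j / 2^j) * binomial(k-r,j) * (r-j)^(2n) agrees with the (2n)-th Bernoulli number. -/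
/-!
Put `t = (1 - cosh x) / 2`. Then `1 - t = cosh² (x / 2)`, so `∑_{k ≥ 1} tᵏ / k = -log (1 - t)`
is `-2 log cosh (x / 2)`, whose derivative is `-tanh (x / 2)`. On the other hand, with
`B(x) = x / (eˣ - 1)`, one has `x tanh (x / 2) = x - 2x / (eˣ + 1) = x - 2 (B(x) - B(2x))`, whose
coefficient of `x²ⁿ` is `-2 (1 - 2²ⁿ) B₂ₙ / (2n)!`. Since `t = O(x²)`, only the terms with
`k ≤ n` reach `x²ⁿ`, and the binomial expansion of `(1 - cosh x)ᵏ` in `eˣ` and `e⁻ˣ` produces the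
triple sum. No logarithm of power series is needed: the truncation `L = ∑_{k ≤ n} tᵏ / k` satisfies
`(1 - t) L' = t' (1 - tⁿ)` exactly, and the error `tⁿ` is `O(x²ⁿ)`.
-/

open PowerSeries Finset

theorem Derivation.one_sub_mul_apply_sum_inv_smul_pow {A : Type*} [CommRing A] [Algebra ℚ A]
    (D : Derivation ℚ A A) (f : A) (K : ℕ) :
    (1 - f) * D (∑ k ∈ Icc 1 K, (k : ℚ)⁻¹ • f ^ k) = D f * (1 - f ^ K) := by
  have hterm : ∀ k ∈ Icc 1 K, D ((k : ℚ)⁻¹ • f ^ k) = f ^ (k - 1) * D f := by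
    intro k hk
    have hk0 : (k : ℚ) ≠ 0 := by have := (mem_Icc.1 hk).1; positivity
    rw [D.map_smul, D.leibniz_pow, ← Nat.cast_smul_eq_nsmul ℚ, smul_smul, inv_mul_cancel₀ hk0,
      one_smul, smul_eq_mul]
  rw [map_sum, sum_congr rfl hterm, ← sum_mul, ← Ico_add_one_right_eq_Icc, sum_Ico_eq_sum_range]
  simp only [add_tsub_cancel_right, add_tsub_cancel_left]
  rw [← mul_assoc, mul_neg_geom_sum, mul_comm]

namespace PowerSeries

section Algebra

variable {A : Type*} [CommRing A] [Algebra ℚ A]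

theorem derivative_evalNegHom_exp : d⁄dX A (evalNegHom (exp A)) = -evalNegHom (exp A) := by
  have h := congrArg (d⁄dX A) (exp_mul_exp_neg_eq_one (A := A))
  rw [Derivation.leibniz, derivative_exp, derivative_one, smul_eq_mul, smul_eq_mul] at h
  linear_combination evalNegHom (exp A) * h -
    (d⁄dX A (evalNegHom (exp A)) + evalNegHom (exp A)) * exp_mul_exp_neg_eq_one (A := A)

theorem exp_pow_mul_evalNegHom_exp_pow (r j : ℕ) :
    exp A ^ r * evalNegHom (exp A) ^ j = rescale ((r : A) - j) (exp A) := by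
  rw [← map_pow, exp_pow_eq_rescale_exp, exp_pow_eq_rescale_exp, evalNegHom, rescale_rescale,
    exp_mul_exp_eq_exp_add, mul_neg_one, sub_eq_add_neg]

theorem exp_add_one_mul_bernoulliPowerSeries_sub_rescale_two [IsDomain A] :
    (exp A + 1) * (bernoulliPowerSeries A - rescale 2 (bernoulliPowerSeries A)) = X := by
  have h := bernoulliPowerSeries_mul_exp_sub_one A
  have h₂ : rescale 2 (bernoulliPowerSeries A) * (exp A ^ 2 - 1) = 2 * X := by
    have := congrArg (rescale (2 : A)) h
    rwa [map_mul, map_sub, map_one, rescale_X, map_ofNat, ← Nat.cast_ofNat,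
      ← exp_pow_eq_rescale_exp] at this
  have hne : exp A - 1 ≠ 0 := fun h0 ↦ by simpa using congrArg (coeff 1) h0
  apply mul_right_cancel₀ hne
  linear_combination (exp A + 1) * h - h₂

end Algebra

theorem coeff_X_mul_derivative {R : Type*} [CommSemiring R] (f : R⟦X⟧) (m : ℕ) :
    coeff m (X * d⁄dX R f) = m * coeff m f := by
  cases m with
  | zero => simp
  | succ m => rw [coeff_succ_X_mul, coeff_derivative, mul_comm]; push_cast; rfl

noncomputable def coshSeries : ℚ⟦X⟧ := C (2⁻¹ : ℚ) * (exp ℚ + evalNegHom (exp ℚ))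

theorem one_sub_coshSeries_pow (k : ℕ) :
    (1 - coshSeries) ^ k = ∑ r ∈ range (k + 1), ∑ j ∈ range (k - r + 1),
      C ((-2⁻¹ : ℚ) ^ r * k.choose r * ((-2⁻¹) ^ j * (k - r).choose j)) *
        (exp ℚ ^ r * evalNegHom (exp ℚ) ^ j) := by
  have hsplit : 1 - coshSeries =
      C (-2⁻¹ : ℚ) * exp ℚ + (C (-2⁻¹ : ℚ) * evalNegHom (exp ℚ) + 1) := by
    rw [coshSeries, map_neg]; ring
  rw [hsplit, add_pow]
  refine sum_congr rfl fun r _ ↦ ?_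
  rw [add_pow, mul_sum, sum_mul]
  refine sum_congr rfl fun j _ ↦ ?_
  simp only [map_mul, map_pow, map_natCast]
  ring

theorem factorial_mul_coeff_one_sub_coshSeries_pow (k m : ℕ) :
    (m.factorial : ℚ) * coeff m ((1 - coshSeries) ^ k) =
      ∑ r ∈ range (k + 1), ((-1) ^ r / 2 ^ r) * (k.choose r : ℚ) *
        ∑ j ∈ range (k - r + 1), ((-1) ^ j / 2 ^ j) * ((k - r).choose j : ℚ) *
          ((r : ℚ) - j) ^ m := by
  have hcoeff : ∀ (a : ℚ) (r j : ℕ), (m.factorial : ℚ) *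
      coeff m (C a * (exp ℚ ^ r * evalNegHom (exp ℚ) ^ j)) = a * ((r : ℚ) - j) ^ m := by
    intro a r j
    rw [exp_pow_mul_evalNegHom_exp_pow, coeff_C_mul, coeff_rescale, coeff_exp]
    simp only [Algebra.algebraMap_self, RingHom.id_apply]
    field_simp
  have hpow : ∀ i : ℕ, (-1 : ℚ) ^ i / 2 ^ i = (-2⁻¹) ^ i := fun i ↦ by
    rw [div_eq_mul_inv, ← inv_pow, ← mul_pow, neg_one_mul]
  rw [one_sub_coshSeries_pow, map_sum, mul_sum]
  refine sum_congr rfl fun r _ ↦ ?_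
  rw [map_sum, mul_sum, mul_sum]
  refine sum_congr rfl fun j _ ↦ ?_
  rw [hcoeff, hpow, hpow]
  ring

noncomputable def halfOneSubCosh : ℚ⟦X⟧ := C (2⁻¹ : ℚ) * (1 - coshSeries)

theorem four_mul_halfOneSubCosh :
    4 * halfOneSubCosh = 2 - exp ℚ - evalNegHom (exp ℚ) := by
  have hc : (2 : ℚ⟦X⟧) * C (2⁻¹ : ℚ) = 1 := by
    rw [← map_ofNat C 2, ← map_mul]; norm_num
  rw [halfOneSubCosh, coshSeries]
  linear_combination (2 - (exp ℚ + evalNegHom (exp ℚ)) * (2 * C (2⁻¹ : ℚ) + 1)) * hc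

theorem four_mul_derivative_halfOneSubCosh :
    4 * d⁄dX ℚ halfOneSubCosh = evalNegHom (exp ℚ) - exp ℚ := by
  have h := congrArg (d⁄dX ℚ) four_mul_halfOneSubCosh
  have h2 : d⁄dX ℚ (2 : ℚ⟦X⟧) = 0 := by simpa using (d⁄dX ℚ).map_natCast 2
  have h4 : d⁄dX ℚ (4 : ℚ⟦X⟧) = 0 := by simpa using (d⁄dX ℚ).map_natCast 4
  simp only [Derivation.leibniz, map_sub, derivative_exp, derivative_evalNegHom_exp, smul_eq_mul,
    h2, h4] at h
  linear_combination h

theorem X_sq_dvd_halfOneSubCosh : (X : ℚ⟦X⟧) ^ 2 ∣ halfOneSubCosh := by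
  rw [X_pow_dvd_iff]
  intro d hd
  interval_cases d <;>
    simp [halfOneSubCosh, coshSeries, evalNegHom, coeff_one, coeff_rescale, coeff_exp,
      -coeff_zero_eq_constantCoeff]
  norm_num

noncomputable def logCoshTrunc (n : ℕ) : ℚ⟦X⟧ :=
  ∑ k ∈ Icc 1 n, (k : ℚ)⁻¹ • halfOneSubCosh ^ k

theorem exp_add_one_sq_mul_X_mul_derivative_logCoshTrunc (n : ℕ) :
    (exp ℚ + 1) ^ 2 * (X * d⁄dX ℚ (logCoshTrunc n) + X -
        2 * (bernoulliPowerSeries ℚ - rescale 2 (bernoulliPowerSeries ℚ))) =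
      X * (exp ℚ ^ 2 - 1) * halfOneSubCosh ^ n := by
  have h := (d⁄dX ℚ).one_sub_mul_apply_sum_inv_smul_pow halfOneSubCosh n
  rw [← logCoshTrunc] at h
  -- `(eˣ + 1)² = 4eˣ (1 - t)` and `e²ˣ - 1 = -4eˣ t'` turn `h` into the claim.
  linear_combination 4 * exp ℚ * X * h
    + X * d⁄dX ℚ (logCoshTrunc n) * exp ℚ * four_mul_halfOneSubCosh
    - X * d⁄dX ℚ (logCoshTrunc n) * exp_mul_exp_neg_eq_one (A := ℚ)
    + X * (1 - halfOneSubCosh ^ n) * exp ℚ * four_mul_derivative_halfOneSubCosh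
    + X * (1 - halfOneSubCosh ^ n) * exp_mul_exp_neg_eq_one (A := ℚ)
    - 2 * (exp ℚ + 1) * exp_add_one_mul_bernoulliPowerSeries_sub_rescale_two (A := ℚ)

theorem X_pow_dvd_X_mul_derivative_logCoshTrunc (n : ℕ) :
    X ^ (2 * n + 1) ∣ X * d⁄dX ℚ (logCoshTrunc n) + X -
      2 * (bernoulliPowerSeries ℚ - rescale 2 (bernoulliPowerSeries ℚ)) := by
  have hunit : IsUnit ((exp ℚ + 1) ^ 2) := by
    rw [isUnit_iff_constantCoeff]
    norm_num
  rw [← hunit.dvd_mul_left, exp_add_one_sq_mul_X_mul_derivative_logCoshTrunc, pow_succ', pow_mul]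
  exact mul_dvd_mul (dvd_mul_right _ _) (pow_dvd_pow_of_dvd X_sq_dvd_halfOneSubCosh n)

theorem coeff_logCoshTrunc_eq_bernoulli (n : ℕ) :
    (n : ℚ) * coeff (2 * n) (logCoshTrunc n) =
      (1 - 2 ^ (2 * n)) * (bernoulli (2 * n) / (2 * n).factorial) := by
  have h := X_pow_dvd_iff.mp (X_pow_dvd_X_mul_derivative_logCoshTrunc n) (2 * n) (by omega)
  rw [← map_ofNat C 2] at h
  simp only [map_sub, map_add, coeff_X_mul_derivative, coeff_X, if_neg (show 2 * n ≠ 1 by omega),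
    coeff_C_mul, coeff_rescale, bernoulliPowerSeries, coeff_mk, Algebra.algebraMap_self,
    RingHom.id_apply] at h
  push_cast at h
  linear_combination h / 2

theorem factorial_mul_coeff_logCoshTrunc (n m : ℕ) :
    (m.factorial : ℚ) * coeff m (logCoshTrunc n) =
      ∑ k ∈ Icc 1 n, (1 / (2 ^ k * k) : ℚ) *
        ∑ r ∈ range (k + 1), ((-1) ^ r / 2 ^ r) * (k.choose r : ℚ) *
          ∑ j ∈ range (k - r + 1), ((-1) ^ j / 2 ^ j) * ((k - r).choose j : ℚ) *
            ((r : ℚ) - j) ^ m := by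
  rw [logCoshTrunc, map_sum, mul_sum]
  refine sum_congr rfl fun k _ ↦ ?_
  rw [← factorial_mul_coeff_one_sub_coshSeries_pow, halfOneSubCosh, map_smul, mul_pow, ← map_pow,
    coeff_C_mul, smul_eq_mul, inv_pow]
  field_simp

end PowerSeries

theorem bernoulli_explicit_formula (n : ℕ) (hn : 0 < n) :
    (bernoulli (2 * n) : ℚ) =
      ((n : ℚ) / (1 - 2 ^ (2 * n))) *
        ∑ k ∈ Finset.Icc 1 n, (1 / (2 ^ k * k) : ℚ) *
          ∑ r ∈ Finset.range (k + 1), ((-1) ^ r / 2 ^ r) * (Nat.choose k r : ℚ) *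
            ∑ j ∈ Finset.range (k - r + 1), ((-1) ^ j / 2 ^ j) * (Nat.choose (k - r) j : ℚ) *
              ((r : ℚ) - j) ^ (2 * n) := by
  have hden : (1 - 2 ^ (2 * n) : ℚ) ≠ 0 := (sub_neg.mpr (one_lt_pow₀ (by norm_num) (by omega))).ne
  have h := PowerSeries.coeff_logCoshTrunc_eq_bernoulli n
  rw [← PowerSeries.factorial_mul_coeff_logCoshTrunc]
  field_simp at h ⊢
  linear_combination -h
end
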